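/- arXiv:2303.11723 — 9 statements merged into one kernel-verified Lean document; each statement's English description precedes it below -/
import Mathlib

section
/- Let M be a real n×n matrix with n ≥ 1 and let r > 0. If every eigenvalue μ of M (every root in ℂ of its characteristic polynomial) satisfies Re(μ) ≤ −r, then det(−M) ≥ rⁿ. -/
/-!
`det (-M) = χ_M(0)` is, up to sign, the product of the complex eigenvalues of `M`, each of
modulus at least `r`, so `|det (-M)| ≥ rⁿ`. The sign is positive: `χ_M` is monic with no real
root in `[0, ∞)`, so by the intermediate value theorem `χ_M(0) > 0`.
-/

open Matrix Polynomial

theorem Polynomial.Monic.pow_natDegree_le_norm_eval {K : Type*} [NormedField K] {f : K[X]}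
    (hm : f.Monic) (hf : f.Splits) {x : K} {r : ℝ} (hr : 0 ≤ r)
    (h : ∀ μ ∈ f.roots, r ≤ ‖x - μ‖) : r ^ f.natDegree ≤ ‖f.eval x‖ := by
  lift r to NNReal using hr
  rw [← coe_nnnorm, ← NNReal.coe_pow, NNReal.coe_le_coe, hf.eval_eq_prod_roots_of_monic hm,
    ← nnnormHom_apply, map_multiset_prod, hf.natDegree_eq_card_roots,
    ← Multiset.card_map (nnnormHom ∘ (x - ·)), Multiset.map_map]
  refine Multiset.pow_card_le_prod fun y hy => ?_
  obtain ⟨μ, hμ, rfl⟩ := Multiset.mem_map.mp hy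
  exact_mod_cast h μ hμ

theorem Polynomial.Monic.eval_pos_of_forall_isRoot_lt {p : ℝ[X]} (hp : p.Monic) {a : ℝ}
    (h : ∀ x, p.IsRoot x → x < a) : 0 < p.eval a := by
  by_cases hdeg : p.natDegree = 0
  · simp [eq_one_of_monic_natDegree_zero hp hdeg]
  have htop := p.tendsto_atTop_of_leadingCoeff_nonneg
    (natDegree_pos_iff_degree_pos.mp (Nat.pos_of_ne_zero hdeg)) (by simp [hp.leadingCoeff])
  obtain ⟨b, hab, hb⟩ := ((Filter.eventually_ge_atTop a).and (htop.eventually_gt_atTop 0)).exists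
  by_contra! hle
  obtain ⟨c, hc, hroot⟩ := intermediate_value_Icc hab p.continuousOn ⟨hle, hb.le⟩
  exact (h c hroot).not_ge hc.1

theorem stmt2_general (n : ℕ) (M : Matrix (Fin n) (Fin n) ℝ) (r : ℝ) (hr : 0 < r)
    (h : ∀ μ : ℂ, ((M.charpoly).map (algebraMap ℝ ℂ)).IsRoot μ → μ.re ≤ -r) :
    r ^ n ≤ (-M).det := by
  have hdet : (-M).det = M.charpoly.eval 0 := by
    simp only [eval_charpoly, scalar_apply, diagonal_zero, zero_sub]
  have hpos : 0 < M.charpoly.eval 0 := M.charpoly_monic.eval_pos_of_forall_isRoot_lt fun x hx => by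
    have hx' : (x : ℂ).re ≤ -r := h x (hx.map (f := algebraMap ℝ ℂ))
    rw [Complex.ofReal_re] at hx'
    linarith
  have hnorm := (M.charpoly_monic.map (algebraMap ℝ ℂ)).pow_natDegree_le_norm_eval
    (IsAlgClosed.splits _) hr.le (x := algebraMap ℝ ℂ 0) fun μ hμ => by
      have hμ' := h μ (isRoot_of_mem_roots hμ)
      rw [map_zero, zero_sub, norm_neg]
      linarith [neg_le_abs μ.re, Complex.abs_re_le_norm μ]
  rwa [natDegree_map, M.charpoly_natDegree_eq_dim, Fintype.card_fin, eval_map_algebraMap,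
    aeval_algebraMap_apply, norm_algebraMap', coe_aeval_eq_eval, Real.norm_eq_abs,
    abs_of_pos hpos, ← hdet] at hnorm

/-- If `n ≥ 1`, `r > 0` and every eigenvalue `μ` of the real `n × n` matrix `M`
(every root in `ℂ` of its characteristic polynomial) satisfies `Re μ ≤ -r`,
then `det (-M) ≥ r ^ n`. -/
theorem stmt2 (n : ℕ) (hn : 1 ≤ n) (M : Matrix (Fin n) (Fin n) ℝ) (r : ℝ) (hr : 0 < r)
    (h : ∀ μ : ℂ, ((M.charpoly).map (algebraMap ℝ ℂ)).IsRoot μ → μ.re ≤ -r) :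
    r ^ n ≤ (-M).det :=
  stmt2_general n M r hr h
end

section
/- (Lemma 1) Let J_R be any real n×n matrix and let J₂, J₄ be real symmetric n×n matrices such that J₄ is negative semidefinite and there exists κ̄ > 0 with J₂ + κ̄² J₄ negative definite. Then there exists K > 0 such that for every κ ≥ K, every eigenvalue μ of the matrix J_R + κ² J₂ + κ⁴ J₄ satisfies Re(μ) ≤ −κ. In particular, the spectral abscissa of J_R + κ² J₂ + κ⁴ J₄ tends to −∞ as κ → +∞. -/
/-!
If `v = x + i y` is a complex eigenvector, for the eigenvalue `μ`, of a real matrix `A`, then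
`Re μ · (xᵀx + yᵀy) = xᵀAx + yᵀAy`; so `Re μ ≤ c` whenever `xᵀAx ≤ c · xᵀx` for all real `x`.
By compactness of the unit sphere, `xᵀJ_R x ≤ a · xᵀx` for some `a`, and the negative definite
`J₂ + κ̄² J₄` satisfies `xᵀ(J₂ + κ̄² J₄)x ≤ b · xᵀx` for some `b < 0`. Since `J₄` is negative
semidefinite, `κ⁴ xᵀJ₄x ≤ κ² κ̄² xᵀJ₄x` for `κ ≥ κ̄`, hence
`xᵀ(J_R + κ² J₂ + κ⁴ J₄)x ≤ (a + b κ²) · xᵀx`, and `a + b κ² ≤ -κ` once `κ` is large.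
-/

open Matrix

namespace Matrix

variable {ι : Type*} [Fintype ι]

theorem isCompact_setOf_dotProduct_self_eq_one :
    IsCompact {x : ι → ℝ | x ⬝ᵥ x = 1} := by
  refine Metric.isCompact_of_isClosed_isBounded
    (isClosed_eq (continuous_id.dotProduct continuous_id) continuous_const) ?_
  refine (Metric.isBounded_closedBall (x := (0 : ι → ℝ)) (r := 1)).subset fun x hx => ?_
  rw [mem_closedBall_zero_iff, pi_norm_le_iff_of_nonneg zero_le_one]
  intro i
  have : x i * x i ≤ x ⬝ᵥ x :=
    Finset.single_le_sum (fun j _ => mul_self_nonneg (x j)) (Finset.mem_univ i)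
  rw [Real.norm_eq_abs, ← abs_one, ← sq_le_sq, sq, sq, one_mul]
  exact this.trans_eq hx

theorem dotProduct_mulVec_le_mul_dotProduct_self (A : Matrix ι ι ℝ) {c : ℝ}
    (h : ∀ u : ι → ℝ, u ⬝ᵥ u = 1 → u ⬝ᵥ A *ᵥ u ≤ c) (x : ι → ℝ) :
    x ⬝ᵥ A *ᵥ x ≤ c * (x ⬝ᵥ x) := by
  rcases eq_or_ne x 0 with rfl | hx
  · simp
  have hpos : 0 < x ⬝ᵥ x := by simpa using dotProduct_star_self_pos_iff.2 hx
  set r := √(x ⬝ᵥ x)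
  have hr : 0 < r := Real.sqrt_pos.2 hpos
  have hr2 : r ^ 2 = x ⬝ᵥ x := Real.sq_sqrt hpos.le
  have hu := h (r⁻¹ • x) (by
    rw [smul_dotProduct, dotProduct_smul, smul_smul, ← hr2, smul_eq_mul]; field_simp)
  rw [mulVec_smul, smul_dotProduct, dotProduct_smul, smul_smul, smul_eq_mul] at hu
  calc x ⬝ᵥ A *ᵥ x = r ^ 2 * (r⁻¹ * r⁻¹ * x ⬝ᵥ A *ᵥ x) := by field_simp
    _ ≤ r ^ 2 * c := by gcongr
    _ = c * (x ⬝ᵥ x) := by rw [hr2, mul_comm]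

theorem continuous_dotProduct_mulVec (A : Matrix ι ι ℝ) :
    Continuous fun x : ι → ℝ => x ⬝ᵥ A *ᵥ x :=
  continuous_id.dotProduct (continuous_const.matrix_mulVec continuous_id)

theorem exists_dotProduct_mulVec_le_mul_dotProduct_self (A : Matrix ι ι ℝ) :
    ∃ c : ℝ, ∀ x : ι → ℝ, x ⬝ᵥ A *ᵥ x ≤ c * (x ⬝ᵥ x) := by
  obtain ⟨c, hc⟩ := isCompact_setOf_dotProduct_self_eq_one.bddAbove_image
    (continuous_dotProduct_mulVec A).continuousOn
  exact ⟨c, dotProduct_mulVec_le_mul_dotProduct_self A fun u hu => hc ⟨u, hu, rfl⟩⟩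

theorem exists_neg_dotProduct_mulVec_le_mul_dotProduct_self {A : Matrix ι ι ℝ}
    (hA : ∀ x : ι → ℝ, x ≠ 0 → x ⬝ᵥ A *ᵥ x < 0) :
    ∃ c < 0, ∀ x : ι → ℝ, x ⬝ᵥ A *ᵥ x ≤ c * (x ⬝ᵥ x) := by
  obtain ⟨δ, hδ, hδA⟩ := isCompact_setOf_dotProduct_self_eq_one.exists_forall_le'
    (continuous_dotProduct_mulVec A).neg.continuousOn (a := 0) fun u hu =>
      neg_pos.2 (hA u (by rintro rfl; simp at hu))
  exact ⟨-δ, neg_neg_of_pos hδ, dotProduct_mulVec_le_mul_dotProduct_self A fun u hu =>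
    le_neg_of_le_neg (hδA u hu)⟩

open Complex in
theorem re_star_dotProduct_map_mulVec (A : Matrix ι ι ℝ) (v : ι → ℂ) :
    (star v ⬝ᵥ A.map (algebraMap ℝ ℂ) *ᵥ v).re =
      (re ∘ v) ⬝ᵥ A *ᵥ (re ∘ v) + (im ∘ v) ⬝ᵥ A *ᵥ (im ∘ v) := by
  simp only [dotProduct, mulVec, re_sum, Finset.mul_sum, ← Finset.sum_add_distrib]
  refine Finset.sum_congr rfl fun i _ => Finset.sum_congr rfl fun j _ => ?_
  simp only [Pi.star_apply, map_apply, Function.comp_apply, coe_algebraMap, star_def, mul_re,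
    mul_im, conj_re, conj_im, ofReal_re, ofReal_im]
  ring

open Complex in
theorem star_dotProduct_self_eq_ofReal (v : ι → ℂ) :
    star v ⬝ᵥ v = ((re ∘ v) ⬝ᵥ (re ∘ v) + (im ∘ v) ⬝ᵥ (im ∘ v) : ℝ) := by
  simp only [dotProduct, ofReal_add, ofReal_sum, ← Finset.sum_add_distrib]
  refine Finset.sum_congr rfl fun i _ => Complex.ext ?_ ?_ <;>
    simp [mul_re, mul_im, mul_comm]

open scoped ComplexOrder in
theorem re_le_of_isRoot_charpoly_map [DecidableEq ι] {A : Matrix ι ι ℝ} {c : ℝ}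
    (hA : ∀ x : ι → ℝ, x ⬝ᵥ A *ᵥ x ≤ c * (x ⬝ᵥ x)) {μ : ℂ}
    (hμ : (A.charpoly.map (algebraMap ℝ ℂ)).IsRoot μ) : μ.re ≤ c := by
  rw [← charpoly_map, ← charpoly_toLin', ← Module.End.hasEigenvalue_iff_isRoot_charpoly] at hμ
  obtain ⟨v, hv⟩ := hμ.exists_hasEigenvector
  set s := (Complex.re ∘ v) ⬝ᵥ (Complex.re ∘ v) + (Complex.im ∘ v) ⬝ᵥ (Complex.im ∘ v)
  have hs : 0 < s := by
    have := dotProduct_star_self_pos_iff.2 hv.2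
    rwa [star_dotProduct_self_eq_ofReal, Complex.zero_lt_real] at this
  refine le_of_mul_le_mul_right ?_ hs
  calc μ.re * s = (star v ⬝ᵥ A.map (algebraMap ℝ ℂ) *ᵥ v).re := by
        rw [← toLin'_apply, hv.apply_eq_smul, dotProduct_smul, star_dotProduct_self_eq_ofReal,
          smul_eq_mul, Complex.re_mul_ofReal]
    _ ≤ c * s := by
        rw [re_star_dotProduct_map_mulVec]
        linarith [hA (Complex.re ∘ v), hA (Complex.im ∘ v)]

theorem dotProduct_mulVec_add_sq_smul_add_pow_four_smul_le {JR J₂ J₄ : Matrix ι ι ℝ}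
    {a b κ₀ κ : ℝ} {z : ι → ℝ} (hR : z ⬝ᵥ JR *ᵥ z ≤ a * (z ⬝ᵥ z))
    (hB : z ⬝ᵥ (J₂ + κ₀ ^ 2 • J₄) *ᵥ z ≤ b * (z ⬝ᵥ z)) (h₄ : z ⬝ᵥ J₄ *ᵥ z ≤ 0)
    (hκ : κ₀ ^ 2 ≤ κ ^ 2) :
    z ⬝ᵥ (JR + κ ^ 2 • J₂ + κ ^ 4 • J₄) *ᵥ z ≤ (a + b * κ ^ 2) * (z ⬝ᵥ z) := by
  simp only [add_mulVec, smul_mulVec, dotProduct_add, dotProduct_smul, smul_eq_mul] at hB ⊢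
  have h₄' : κ ^ 2 * (z ⬝ᵥ J₄ *ᵥ z) ≤ κ₀ ^ 2 * (z ⬝ᵥ J₄ *ᵥ z) :=
    mul_le_mul_of_nonpos_right hκ h₄
  nlinarith [mul_le_mul_of_nonneg_left h₄' (sq_nonneg κ)]

end Matrix

theorem stmt3_general (n : ℕ) (JR J2 J4 : Matrix (Fin n) (Fin n) ℝ)
    (hJ4nsd : ∀ x : Fin n → ℝ, x ⬝ᵥ J4.mulVec x ≤ 0)
    (hκbar : ∃ κbar : ℝ, 0 < κbar ∧
      ∀ x : Fin n → ℝ, x ≠ 0 → x ⬝ᵥ (J2 + κbar ^ 2 • J4).mulVec x < 0) :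
    ∃ K : ℝ, 0 < K ∧ ∀ κ : ℝ, K ≤ κ → ∀ μ : ℂ,
      (((JR + κ ^ 2 • J2 + κ ^ 4 • J4).charpoly).map (algebraMap ℝ ℂ)).IsRoot μ →
        μ.re ≤ -κ := by
  obtain ⟨κbar, hκbar_pos, hneg⟩ := hκbar
  obtain ⟨b, hb, hB⟩ := exists_neg_dotProduct_mulVec_le_mul_dotProduct_self hneg
  obtain ⟨a, hR⟩ := exists_dotProduct_mulVec_le_mul_dotProduct_self JR
  refine ⟨max κbar (max 1 ((|a| + 1) / -b)), lt_max_of_lt_left hκbar_pos, fun κ hκ μ hμ => ?_⟩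
  obtain ⟨hκ₀, hκ₁, hκa⟩ : κbar ≤ κ ∧ 1 ≤ κ ∧ (|a| + 1) / -b ≤ κ := by
    simpa only [max_le_iff] using hκ
  have hbκ : |a| + 1 ≤ -b * κ := (div_le_iff₀' (neg_pos.2 hb)).1 hκa
  calc μ.re ≤ a + b * κ ^ 2 := re_le_of_isRoot_charpoly_map (fun z =>
        dotProduct_mulVec_add_sq_smul_add_pow_four_smul_le (hR z) (hB z) (hJ4nsd z)
          (pow_le_pow_left₀ hκbar_pos.le hκ₀ 2)) hμ
    _ ≤ -κ := by
        nlinarith [mul_le_mul_of_nonneg_right hbκ (zero_le_one.trans hκ₁),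
          mul_nonneg (abs_nonneg a) (sub_nonneg.2 hκ₁), le_abs_self a]

/-- (Lemma 1) Let `J_R` be any real `n × n` matrix and `J₂, J₄` real symmetric `n × n`
matrices with `J₄` negative semidefinite, and suppose there is `κ̄ > 0` such that
`J₂ + κ̄² J₄` is negative definite.  Then there exists `K > 0` such that for every
`κ ≥ K` every eigenvalue `μ` of `J_R + κ² J₂ + κ⁴ J₄` satisfies `Re μ ≤ -κ`
(so the spectral abscissa tends to `-∞` as `κ → +∞`). -/
theorem stmt3 (n : ℕ) (JR J2 J4 : Matrix (Fin n) (Fin n) ℝ)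
    (hJ2 : J2.IsSymm) (hJ4 : J4.IsSymm)
    (hJ4nsd : ∀ x : Fin n → ℝ, x ⬝ᵥ J4.mulVec x ≤ 0)
    (hκbar : ∃ κbar : ℝ, 0 < κbar ∧
      ∀ x : Fin n → ℝ, x ≠ 0 → x ⬝ᵥ (J2 + κbar ^ 2 • J4).mulVec x < 0) :
    ∃ K : ℝ, 0 < K ∧ ∀ κ : ℝ, K ≤ κ → ∀ μ : ℂ,
      (((JR + κ ^ 2 • J2 + κ ^ 4 • J4).charpoly).map (algebraMap ℝ ℂ)).IsRoot μ →
        μ.re ≤ -κ :=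
  stmt3_general n JR J2 J4 hJ4nsd hκbar
end

section
/- (Remark 1, uniform version of Lemma 1) Let B be a real n×m matrix, C a real m×n matrix, and let 𝒟 = {Δ ∈ ℝ^m : Δⱼ⁻ ≤ Δⱼ ≤ Δⱼ⁺ for all j} with given bounds 0 ≤ Δⱼ⁻ ≤ Δⱼ⁺ < ∞. Let J₂, J₄ be real symmetric n×n matrices such that J₄ is negative semidefinite and there exists κ̄ > 0 with J₂ + κ̄² J₄ negative definite. Then there exists K > 0 such that for every κ ≥ K and every Δ ∈ 𝒟, every eigenvalue μ of B·diag(Δ)·C + κ² J₂ + κ⁴ J₄ satisfies Re(μ) ≤ −κ. -/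
open Matrix Polynomial

lemma negdef_ex (n : ℕ) (P : Matrix (Fin n) (Fin n) ℝ)
    (h : ∀ x : Fin n → ℝ, x ≠ 0 → x ⬝ᵥ P.mulVec x < 0) :
    ∃ ε : ℝ, 0 < ε ∧ ∀ x : Fin n → ℝ, x ⬝ᵥ P.mulVec x ≤ -ε * (x ⬝ᵥ x) := by
  rcases Nat.eq_zero_or_pos n with hn | hn
  · subst hn
    exact ⟨1, one_pos, fun x => by simp [dotProduct]⟩
  haveI : NeZero n := ⟨hn.ne'⟩
  have hcont : ∀ Q : Matrix (Fin n) (Fin n) ℝ,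
      Continuous fun x : Fin n → ℝ => x ⬝ᵥ Q.mulVec x := by
    intro Q
    simp only [dotProduct, mulVec]
    apply continuous_finset_sum
    intro i _
    exact (continuous_apply i).mul
      (continuous_finset_sum _ fun j _ => continuous_const.mul (continuous_apply j))
  set S : Set (Fin n → ℝ) := {x | x ⬝ᵥ x = 1} with hS
  have hclosed : IsClosed S := by
    have : S = (fun x : Fin n → ℝ => x ⬝ᵥ (1 : Matrix (Fin n) (Fin n) ℝ).mulVec x) ⁻¹' {1} := by
      ext x; simp [hS, Matrix.one_mulVec]
    rw [this]
    exact IsClosed.preimage (hcont 1) isClosed_singleton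
  have hbdd : Bornology.IsBounded S := by
    apply (Metric.isBounded_closedBall (x := (0 : Fin n → ℝ)) (r := 1)).subset
    intro x hx
    simp only [Metric.mem_closedBall, dist_zero_right]
    rw [pi_norm_le_iff_of_nonneg zero_le_one]
    intro i
    have h1 : x i * x i ≤ x ⬝ᵥ x := by
      have := Finset.single_le_sum (f := fun k => x k * x k)
        (fun k _ => mul_self_nonneg _) (Finset.mem_univ i)
      simpa [dotProduct] using this
    rw [hS] at hx
    have : x i * x i ≤ 1 := h1.trans_eq hx
    rw [Real.norm_eq_abs]
    nlinarith [abs_nonneg (x i), sq_abs (x i)]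
  have hcompact : IsCompact S := Metric.isCompact_of_isClosed_isBounded hclosed hbdd
  have hne : S.Nonempty := by
    refine ⟨Pi.single (0 : Fin n) 1, ?_⟩
    simp [hS, dotProduct, Pi.single_apply]
  obtain ⟨x₀, hx₀S, hmax⟩ := hcompact.exists_isMaxOn hne (hcont P).continuousOn
  have hx₀ne : x₀ ≠ 0 := by
    intro h0
    rw [hS] at hx₀S
    simp [h0, dotProduct] at hx₀S
  refine ⟨-(x₀ ⬝ᵥ P.mulVec x₀), by simpa using h x₀ hx₀ne, fun x => ?_⟩
  rcases eq_or_ne x 0 with rfl | hx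
  · simp [dotProduct]
  have hxx : 0 < x ⬝ᵥ x := by
    have h0 : 0 ≤ x ⬝ᵥ x := Finset.sum_nonneg fun i _ => mul_self_nonneg _
    rcases h0.lt_or_eq with h' | h'
    · exact h'
    · exact absurd ((dotProduct_self_eq_zero).1 h'.symm) hx
  set t : ℝ := Real.sqrt (x ⬝ᵥ x) with ht
  have ht0 : 0 < t := Real.sqrt_pos.2 hxx
  have ht2 : t * t = x ⬝ᵥ x := Real.mul_self_sqrt hxx.le
  have hu : (t⁻¹ • x) ⬝ᵥ (t⁻¹ • x) = 1 := by
    rw [smul_dotProduct, dotProduct_smul, smul_eq_mul, smul_eq_mul, ← mul_assoc, ← ht2]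
    field_simp
  have hle : (t⁻¹ • x) ⬝ᵥ P.mulVec (t⁻¹ • x) ≤ x₀ ⬝ᵥ P.mulVec x₀ := hmax hu
  have hq : (t⁻¹ • x) ⬝ᵥ P.mulVec (t⁻¹ • x) = t⁻¹ * t⁻¹ * (x ⬝ᵥ P.mulVec x) := by
    rw [mulVec_smul, smul_dotProduct, dotProduct_smul, smul_eq_mul, smul_eq_mul]; ring
  rw [hq] at hle
  have hfin := mul_le_mul_of_nonneg_left hle (le_of_lt (mul_pos ht0 ht0))
  calc x ⬝ᵥ P.mulVec x = (t * t) * (t⁻¹ * t⁻¹ * (x ⬝ᵥ P.mulVec x)) := by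
        field_simp
    _ ≤ (t * t) * (x₀ ⬝ᵥ P.mulVec x₀) := hfin
    _ = -(-(x₀ ⬝ᵥ P.mulVec x₀)) * (x ⬝ᵥ x) := by rw [ht2]; ring

lemma exists_eigvec {n : ℕ} (M : Matrix (Fin n) (Fin n) ℝ) (μ : ℂ)
    (h : ((M.charpoly).map (algebraMap ℝ ℂ)).IsRoot μ) :
    ∃ v : Fin n → ℂ, v ≠ 0 ∧ (M.map (algebraMap ℝ ℂ)).mulVec v = μ • v := by
  set M' : Matrix (Fin n) (Fin n) ℂ := M.map (algebraMap ℝ ℂ) with hM'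
  have h1 : (M'.charpoly).IsRoot μ := by
    rw [hM', Matrix.charpoly_map]; exact h
  have h2 : (Matrix.diagonal (fun _ : Fin n => μ) - M').det = 0 := by
    have heq : (charmatrix M').map (evalRingHom μ) = Matrix.diagonal (fun _ : Fin n => μ) - M' := by
      ext i j
      by_cases hij : i = j
      · subst hij; simp [charmatrix_apply_eq]
      · simp [charmatrix_apply_ne _ _ _ hij, Matrix.diagonal_apply_ne _ hij]
    have := h1
    rw [Polynomial.IsRoot, Matrix.charpoly] at this
    have h3 : (evalRingHom μ) M'.charmatrix.det = ((evalRingHom μ).mapMatrix M'.charmatrix).det :=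
      RingHom.map_det _ _
    rw [← heq]
    have h4 : (evalRingHom μ).mapMatrix M'.charmatrix = M'.charmatrix.map (evalRingHom μ) := rfl
    rw [← h4]
    rw [← h3]
    exact this
  obtain ⟨v, hv0, hv⟩ := (Matrix.exists_mulVec_eq_zero_iff).2 h2
  refine ⟨v, hv0, ?_⟩
  rw [sub_mulVec] at hv
  have hd : (Matrix.diagonal (fun _ : Fin n => μ)).mulVec v = μ • v := by
    rw [← Matrix.smul_one_eq_diagonal, smul_mulVec, one_mulVec]
  rw [hd] at hv
  exact (sub_eq_zero.1 hv).symm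

lemma quad_bound {n m : ℕ} (B : Matrix (Fin n) (Fin m) ℝ) (C : Matrix (Fin m) (Fin n) ℝ)
    (Δ Δhi : Fin m → ℝ) (hΔ : ∀ j, 0 ≤ Δ j ∧ Δ j ≤ Δhi j) (w : Fin n → ℝ) :
    w ⬝ᵥ (B * Matrix.diagonal Δ * C).mulVec w
      ≤ (∑ i, ∑ k, ∑ j, |B i j| * Δhi j * |C j k|) * (w ⬝ᵥ w) := by
  have hW : 0 ≤ w ⬝ᵥ w := Finset.sum_nonneg fun i _ => mul_self_nonneg _
  have hsq : ∀ i, w i * w i ≤ w ⬝ᵥ w := fun i => by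
    have := Finset.single_le_sum (f := fun k => w k * w k)
      (fun k _ => mul_self_nonneg _) (Finset.mem_univ i)
    simpa [dotProduct] using this
  have habs : ∀ i k, |w i * w k| ≤ w ⬝ᵥ w := by
    intro i k
    rw [abs_mul]
    nlinarith [hsq i, hsq k, sq_abs (w i), sq_abs (w k), sq_nonneg (|w i| - |w k|),
      abs_nonneg (w i), abs_nonneg (w k)]
  have hL : w ⬝ᵥ (B * Matrix.diagonal Δ * C).mulVec w
      = ∑ i, ∑ k, w i * ((B * Matrix.diagonal Δ * C) i k * w k) := by
    simp [dotProduct, mulVec, Finset.mul_sum]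
  rw [hL, Finset.sum_mul]
  refine Finset.sum_le_sum fun i _ => ?_
  rw [Finset.sum_mul]
  refine Finset.sum_le_sum fun k _ => ?_
  have hA : (B * Matrix.diagonal Δ * C) i k = ∑ j, B i j * Δ j * C j k := by
    rw [Matrix.mul_apply]
    refine Finset.sum_congr rfl fun j _ => ?_
    rw [Matrix.mul_diagonal]
  rw [hA, Finset.sum_mul, Finset.mul_sum, Finset.sum_mul]
  refine Finset.sum_le_sum fun j _ => ?_
  have h1 : w i * (B i j * Δ j * C j k * w k) ≤ |B i j * Δ j * C j k| * (w ⬝ᵥ w) := by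
    calc w i * (B i j * Δ j * C j k * w k)
        = (B i j * Δ j * C j k) * (w i * w k) := by ring
      _ ≤ |(B i j * Δ j * C j k) * (w i * w k)| := le_abs_self _
      _ = |B i j * Δ j * C j k| * |w i * w k| := abs_mul _ _
      _ ≤ |B i j * Δ j * C j k| * (w ⬝ᵥ w) :=
          mul_le_mul_of_nonneg_left (habs i k) (abs_nonneg _)
  refine h1.trans ?_
  refine mul_le_mul_of_nonneg_right ?_ hW
  rw [abs_mul, abs_mul, abs_of_nonneg (hΔ j).1]
  have := (hΔ j).2
  have hB := abs_nonneg (B i j)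
  have hC := abs_nonneg (C j k)
  nlinarith [mul_nonneg (mul_nonneg hB (sub_nonneg.2 this)) hC]

lemma re_quad {n : ℕ} (M : Matrix (Fin n) (Fin n) ℝ) (v : Fin n → ℂ) :
    (star v ⬝ᵥ (M.map (algebraMap ℝ ℂ)).mulVec v).re
      = (fun i => (v i).re) ⬝ᵥ M.mulVec (fun i => (v i).re)
        + (fun i => (v i).im) ⬝ᵥ M.mulVec (fun i => (v i).im) := by
  simp only [dotProduct, mulVec, Matrix.map_apply, Pi.star_apply, Finset.mul_sum,
    Complex.re_sum, ← Finset.sum_add_distrib]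
  refine Finset.sum_congr rfl fun i _ => ?_
  refine Finset.sum_congr rfl fun j _ => ?_
  simp [Complex.mul_re, Complex.mul_im]

/-- (Remark 1, uniform version of Lemma 1) With parameters `Δ` ranging in a bounded box
`𝒟 = {Δ : ∀ j, Δⱼ⁻ ≤ Δⱼ ≤ Δⱼ⁺}` with `0 ≤ Δⱼ⁻ ≤ Δⱼ⁺`, and `J₂, J₄` real symmetric with
`J₄` negative semidefinite and `J₂ + κ̄² J₄` negative definite for some `κ̄ > 0`,
there exists `K > 0` such that for every `κ ≥ K` and every `Δ ∈ 𝒟`, every eigenvalue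
`μ` of `B ⬝ diag(Δ) ⬝ C + κ² J₂ + κ⁴ J₄` satisfies `Re μ ≤ -κ`. -/
theorem stmt4 (n m : ℕ) (B : Matrix (Fin n) (Fin m) ℝ) (C : Matrix (Fin m) (Fin n) ℝ)
    (Δlo Δhi : Fin m → ℝ) (hbounds : ∀ j, 0 ≤ Δlo j ∧ Δlo j ≤ Δhi j)
    (J2 J4 : Matrix (Fin n) (Fin n) ℝ)
    (hJ2 : J2.IsSymm) (hJ4 : J4.IsSymm)
    (hJ4nsd : ∀ x : Fin n → ℝ, x ⬝ᵥ J4.mulVec x ≤ 0)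
    (hκbar : ∃ κbar : ℝ, 0 < κbar ∧
      ∀ x : Fin n → ℝ, x ≠ 0 → x ⬝ᵥ (J2 + κbar ^ 2 • J4).mulVec x < 0) :
    ∃ K : ℝ, 0 < K ∧ ∀ κ : ℝ, K ≤ κ → ∀ Δ : Fin m → ℝ,
      (∀ j, Δlo j ≤ Δ j ∧ Δ j ≤ Δhi j) → ∀ μ : ℂ,
      (((B * Matrix.diagonal Δ * C + κ ^ 2 • J2 + κ ^ 4 • J4).charpoly).map
        (algebraMap ℝ ℂ)).IsRoot μ → μ.re ≤ -κ := by
  obtain ⟨κb, hκb, hnd⟩ := hκbar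
  obtain ⟨ε, hε, hP⟩ := negdef_ex n (J2 + κb ^ 2 • J4) hnd
  set c : ℝ := ∑ i, ∑ k, ∑ j, |B i j| * Δhi j * |C j k| with hc
  have hc0 : 0 ≤ c := by
    refine Finset.sum_nonneg fun i _ => Finset.sum_nonneg fun k _ =>
      Finset.sum_nonneg fun j _ => ?_
    have h0 : 0 ≤ Δhi j := le_trans (hbounds j).1 (hbounds j).2
    positivity
  refine ⟨max κb (max 1 ((1 + c) / ε)),
    lt_of_lt_of_le one_pos (le_max_of_le_right (le_max_left _ _)), ?_⟩
  intro κ hκ Δ hΔ μ hroot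
  have hκb' : κb ≤ κ := le_trans (le_max_left _ _) hκ
  have hκ1 : 1 ≤ κ := le_trans (le_max_of_le_right (le_max_left _ _)) hκ
  have hκc : (1 + c) / ε ≤ κ := le_trans (le_max_of_le_right (le_max_right _ _)) hκ
  have hκ0 : 0 < κ := lt_of_lt_of_le one_pos hκ1
  set M : Matrix (Fin n) (Fin n) ℝ :=
    B * Matrix.diagonal Δ * C + κ ^ 2 • J2 + κ ^ 4 • J4 with hM
  obtain ⟨v, hv0, hv⟩ := exists_eigvec M μ hroot
  set x : Fin n → ℝ := fun i => (v i).re with hxdef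
  set y : Fin n → ℝ := fun i => (v i).im with hydef
  set N : ℝ := ∑ i, Complex.normSq (v i) with hN
  have hNpos : 0 < N := by
    obtain ⟨i0, hi0⟩ := Function.ne_iff.1 hv0
    exact Finset.sum_pos' (fun i _ => Complex.normSq_nonneg _)
      ⟨i0, Finset.mem_univ _, Complex.normSq_pos.2 (by simpa using hi0)⟩
  have hxy : x ⬝ᵥ x + y ⬝ᵥ y = N := by
    rw [hN, dotProduct, dotProduct, ← Finset.sum_add_distrib]
    exact Finset.sum_congr rfl fun i _ => (Complex.normSq_apply _).symm
  have hMw : ∀ w : Fin n → ℝ, w ⬝ᵥ M.mulVec w ≤ (c - κ ^ 2 * ε) * (w ⬝ᵥ w) := by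
    intro w
    have hsplit : w ⬝ᵥ M.mulVec w = w ⬝ᵥ (B * Matrix.diagonal Δ * C).mulVec w
        + κ ^ 2 * (w ⬝ᵥ J2.mulVec w) + κ ^ 4 * (w ⬝ᵥ J4.mulVec w) := by
      rw [hM, add_mulVec, add_mulVec, dotProduct_add, dotProduct_add,
        smul_mulVec, smul_mulVec, dotProduct_smul, dotProduct_smul,
        smul_eq_mul, smul_eq_mul]
    have h1 : w ⬝ᵥ (B * Matrix.diagonal Δ * C).mulVec w ≤ c * (w ⬝ᵥ w) := by
      rw [hc]
      exact quad_bound B C Δ Δhi (fun j => ⟨le_trans (hbounds j).1 (hΔ j).1, (hΔ j).2⟩) w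
    have h2 : w ⬝ᵥ (J2 + κb ^ 2 • J4).mulVec w ≤ -ε * (w ⬝ᵥ w) := hP w
    have h2' : w ⬝ᵥ (J2 + κb ^ 2 • J4).mulVec w
        = w ⬝ᵥ J2.mulVec w + κb ^ 2 * (w ⬝ᵥ J4.mulVec w) := by
      rw [add_mulVec, dotProduct_add, smul_mulVec, dotProduct_smul, smul_eq_mul]
    have h4 := hJ4nsd w
    have hW : 0 ≤ w ⬝ᵥ w := Finset.sum_nonneg fun i _ => mul_self_nonneg _
    rw [hsplit]
    rw [h2'] at h2
    have hpow : κ ^ 2 * κb ^ 2 ≤ κ ^ 4 := by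
      nlinarith [mul_nonneg (mul_nonneg (sq_nonneg κ) (sub_nonneg.2 hκb'))
        (by linarith : (0:ℝ) ≤ κ + κb)]
    have hstep := mul_le_mul_of_nonpos_right hpow h4
    have hstep2 := mul_le_mul_of_nonneg_left h2 (sq_nonneg κ)
    nlinarith [h1, hstep, hstep2]
  have hsv : star v ⬝ᵥ v = (N : ℂ) := by
    simp only [dotProduct, Pi.star_apply]
    rw [hN]
    push_cast
    refine Finset.sum_congr rfl fun i _ => ?_
    rw [Complex.star_def, mul_comm, Complex.mul_conj]
  have hL : (star v ⬝ᵥ (M.map (algebraMap ℝ ℂ)).mulVec v) = μ * (N : ℂ) := by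
    rw [hv, dotProduct_smul, hsv, smul_eq_mul]
  have hre : μ.re * N = x ⬝ᵥ M.mulVec x + y ⬝ᵥ M.mulVec y := by
    have hcr := congrArg Complex.re hL
    rw [re_quad M v] at hcr
    rw [hxdef, hydef, hcr]
    simp [Complex.mul_re]
  have hkey : μ.re * N ≤ (c - κ ^ 2 * ε) * N := by
    rw [hre]
    calc x ⬝ᵥ M.mulVec x + y ⬝ᵥ M.mulVec y
        ≤ (c - κ ^ 2 * ε) * (x ⬝ᵥ x) + (c - κ ^ 2 * ε) * (y ⬝ᵥ y) :=
          add_le_add (hMw x) (hMw y)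
      _ = (c - κ ^ 2 * ε) * N := by rw [← hxy]; ring
  have hμ : μ.re ≤ c - κ ^ 2 * ε := le_of_mul_le_mul_right hkey hNpos
  have h5 : 1 + c ≤ κ * ε := (div_le_iff₀ hε).1 hκc
  nlinarith [mul_le_mul_of_nonneg_left h5 hκ0.le, mul_nonneg (sub_nonneg.2 hκ1) hc0]
end

section
/- Let J_R be any real n×n matrix with n ≥ 1 and let J₂, J₄ be real symmetric n×n matrices such that J₄ is negative semidefinite and there exists κ̄ > 0 with J₂ + κ̄² J₄ negative definite. Then det(−(J_R + κ² J₂ + κ⁴ J₄)) tends to +∞ as κ → +∞. -/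
/-!
For `κ ≥ κ̄` split `-(J_R + κ² J₂ + κ⁴ J₄) = -J_R + κ² (-(J₂ + κ̄² J₄)) + κ² (κ² - κ̄²) (-J₄)`.
The middle quadratic form is coercive, the last one is nonnegative and the first is bounded
below, so `xᵀ M(κ) x ≥ μ(κ) |x|²` with `μ(κ) = C + c κ² → ∞`.

A real matrix `M` with `xᵀ M x ≥ μ |x|²` and `μ > 0` has `det M ≥ μⁿ`:
`det M > 0` because every matrix on the segment from `1` to `M` has a positive definite quadratic
form and is therefore invertible, and `det M ² = det (Mᵀ M) ≥ μ²ⁿ` because `|M x| ≥ μ |x|`.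
-/

open Filter Matrix

lemma Finite.exists_pos_forall_le {α : Type*} [Finite α] {f : α → ℝ} (hf : ∀ i, 0 < f i) :
    ∃ c > 0, ∀ i, c ≤ f i :=
  ((eventually_mem_nhdsWithin (s := Set.Ioi 0)).and (eventually_all.2 fun i =>
    (eventually_le_nhds (hf i)).filter_mono nhdsWithin_le_nhds)).exists

namespace Matrix

variable {ι : Type*} [Fintype ι]

lemma IsHermitian.forall_le_eigenvalues_iff [DecidableEq ι] {A : Matrix ι ι ℝ}
    (hA : A.IsHermitian) (c : ℝ) :
    (∀ i, c ≤ hA.eigenvalues i) ↔ ∀ x, c * (x ⬝ᵥ x) ≤ x ⬝ᵥ A *ᵥ x := by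
  have hc : (A - c • 1).IsHermitian := hA.sub (isHermitian_one.smul (IsSelfAdjoint.all c))
  calc (∀ i, c ≤ hA.eigenvalues i)
      ↔ spectrum ℝ (A - c • 1) ⊆ {a | 0 ≤ a} := by
        simp [← Algebra.algebraMap_eq_smul_one, ← spectrum.sub_singleton_eq,
          hA.spectrum_real_eq_range_eigenvalues, Set.subset_def]
    _ ↔ (A - c • 1).PosSemidef := by
        rw [posSemidef_iff_isHermitian_and_spectrum_nonneg, and_iff_right hc]
    _ ↔ ∀ x, c * (x ⬝ᵥ x) ≤ x ⬝ᵥ A *ᵥ x := by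
        rw [posSemidef_iff_dotProduct_mulVec, and_iff_right hc]
        simp [sub_mulVec, smul_mulVec]

lemma dotProduct_mulVec_add_transpose_self (A : Matrix ι ι ℝ) (x : ι → ℝ) :
    x ⬝ᵥ (A + Aᵀ) *ᵥ x = 2 * (x ⬝ᵥ A *ᵥ x) := by
  rw [add_mulVec, dotProduct_add, dotProduct_transpose_mulVec]
  ring

lemma dotProduct_self_pos_of_ne_zero {x : ι → ℝ} (hx : x ≠ 0) : 0 < x ⬝ᵥ x := by
  simpa using dotProduct_star_self_pos_iff.2 hx

lemma exists_forall_mul_dotProduct_self_le (A : Matrix ι ι ℝ) :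
    ∃ c, ∀ x, c * (x ⬝ᵥ x) ≤ x ⬝ᵥ A *ᵥ x := by
  classical
  have hS : (A + Aᵀ).IsHermitian := isHermitian_iff_isSymm.2 (isSymm_add_transpose_self A)
  obtain ⟨c, hc⟩ := (Set.finite_range hS.eigenvalues).bddBelow
  refine ⟨c / 2, fun x => ?_⟩
  have := (hS.forall_le_eigenvalues_iff c).1 (fun i => hc ⟨i, rfl⟩) x
  rw [dotProduct_mulVec_add_transpose_self] at this
  linarith

lemma exists_pos_forall_mul_dotProduct_self_le (A : Matrix ι ι ℝ)
    (hA : ∀ x ≠ 0, 0 < x ⬝ᵥ A *ᵥ x) : ∃ c > 0, ∀ x, c * (x ⬝ᵥ x) ≤ x ⬝ᵥ A *ᵥ x := by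
  classical
  have hS : (A + Aᵀ).PosDef :=
    .of_dotProduct_mulVec_pos (isHermitian_iff_isSymm.2 (isSymm_add_transpose_self A))
      fun x hx => by simpa [dotProduct_mulVec_add_transpose_self] using hA x hx
  obtain ⟨c, hc0, hc⟩ := Finite.exists_pos_forall_le hS.eigenvalues_pos
  refine ⟨c / 2, by positivity, fun x => ?_⟩
  have := (hS.1.forall_le_eigenvalues_iff c).1 hc x
  rw [dotProduct_mulVec_add_transpose_self] at this
  linarith

lemma det_pos_of_forall_dotProduct_mulVec_pos [DecidableEq ι] (A : Matrix ι ι ℝ)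
    (hA : ∀ x ≠ 0, 0 < x ⬝ᵥ A *ᵥ x) : 0 < A.det := by
  set B : ℝ → Matrix ι ι ℝ := fun t => (1 - t) • 1 + t • A
  have hB : ∀ t ∈ Set.Icc (0 : ℝ) 1, (B t).det ≠ 0 := by
    intro t ht hdet
    obtain ⟨x, hx, hBx⟩ := exists_mulVec_eq_zero_iff.2 hdet
    have hquad : x ⬝ᵥ B t *ᵥ x = (1 - t) * (x ⬝ᵥ x) + t * (x ⬝ᵥ A *ᵥ x) := by
      simp [B, add_mulVec, smul_mulVec]
    rw [hBx, dotProduct_zero] at hquad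
    have hxx := dotProduct_self_pos_of_ne_zero hx
    rcases ht.2.lt_or_eq with ht1 | rfl
    · nlinarith [mul_pos (sub_pos.2 ht1) hxx, mul_nonneg ht.1 (hA x hx).le]
    · linarith [hA x hx]
  by_contra! hle
  have hcont : ContinuousOn (fun t => (B t).det) (Set.Icc 0 1) := by fun_prop
  obtain ⟨t, ht, h0⟩ :=
    intermediate_value_Icc' zero_le_one hcont ⟨by simpa [B] using hle, by simp [B]⟩
  exact hB t ht h0

lemma sq_mul_dotProduct_self_le_mulVec_dotProduct_mulVec (A : Matrix ι ι ℝ) {μ : ℝ} (hμ : 0 ≤ μ)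
    (hA : ∀ x, μ * (x ⬝ᵥ x) ≤ x ⬝ᵥ A *ᵥ x) (x : ι → ℝ) :
    μ ^ 2 * (x ⬝ᵥ x) ≤ A *ᵥ x ⬝ᵥ A *ᵥ x := by
  have h := dotProduct_star_self_nonneg (A *ᵥ x - μ • x)
  simp only [star_trivial, sub_dotProduct, dotProduct_sub, smul_dotProduct, dotProduct_smul,
    smul_eq_mul, dotProduct_comm (A *ᵥ x) x] at h
  nlinarith [hA x]

lemma pow_card_le_det_of_forall_mul_dotProduct_self_le [DecidableEq ι] (A : Matrix ι ι ℝ) {μ : ℝ}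
    (hμ : 0 < μ) (hA : ∀ x, μ * (x ⬝ᵥ x) ≤ x ⬝ᵥ A *ᵥ x) : μ ^ Fintype.card ι ≤ A.det := by
  have hdet : 0 < A.det := det_pos_of_forall_dotProduct_mulVec_pos A fun x hx =>
    (mul_pos hμ (dotProduct_self_pos_of_ne_zero hx)).trans_le (hA x)
  have hAA : (Aᴴ * A).IsHermitian := isHermitian_conjTranspose_mul_self A
  have heig : ∀ i, μ ^ 2 ≤ hAA.eigenvalues i := (hAA.forall_le_eigenvalues_iff _).2 fun x => by
    rw [← mulVec_mulVec, conjTranspose_eq_transpose_of_trivial, dotProduct_transpose_mulVec]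
    exact sq_mul_dotProduct_self_le_mulVec_dotProduct_mulVec A hμ.le hA x
  have hsq : (μ ^ Fintype.card ι) ^ 2 ≤ A.det ^ 2 := calc
    (μ ^ Fintype.card ι) ^ 2 = ∏ _i : ι, μ ^ 2 := by
      rw [Finset.prod_const, Finset.card_univ, ← pow_mul, ← pow_mul, mul_comm]
    _ ≤ ∏ i, hAA.eigenvalues i := Finset.prod_le_prod (fun _ _ => by positivity) fun i _ => heig i
    _ = (Aᴴ * A).det := by simpa using hAA.det_eq_prod_eigenvalues.symm
    _ = A.det ^ 2 := by rw [det_mul, det_conjTranspose, star_trivial, sq]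
  exact (pow_le_pow_iff_left₀ (by positivity) hdet.le two_ne_zero).1 hsq

end Matrix

lemma add_mul_sq_mul_dotProduct_self_le {ι : Type*} [Fintype ι] {JR J2 J4 : Matrix ι ι ℝ}
    {κ₀ κ c C : ℝ} (hJ4 : ∀ x, x ⬝ᵥ J4 *ᵥ x ≤ 0) (hR : ∀ x, C * (x ⬝ᵥ x) ≤ x ⬝ᵥ (-JR) *ᵥ x)
    (hN : ∀ x, c * (x ⬝ᵥ x) ≤ x ⬝ᵥ (-(J2 + κ₀ ^ 2 • J4)) *ᵥ x) (hκ : κ₀ ^ 2 ≤ κ ^ 2)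
    (x : ι → ℝ) :
    (C + c * κ ^ 2) * (x ⬝ᵥ x) ≤ x ⬝ᵥ (-(JR + κ ^ 2 • J2 + κ ^ 4 • J4)) *ᵥ x := by
  have h4 := mul_nonneg (mul_nonneg (sq_nonneg κ) (sub_nonneg.2 hκ)) (neg_nonneg.2 (hJ4 x))
  have h2 := mul_le_mul_of_nonneg_left (hN x) (sq_nonneg κ)
  have hR := hR x
  simp only [neg_mulVec, add_mulVec, smul_mulVec, dotProduct_neg, dotProduct_add,
    dotProduct_smul, smul_eq_mul] at h2 hR ⊢
  nlinarith

theorem stmt5_general (n : ℕ) (hn : 1 ≤ n) (JR J2 J4 : Matrix (Fin n) (Fin n) ℝ)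
    (hJ4nsd : ∀ x : Fin n → ℝ, x ⬝ᵥ J4.mulVec x ≤ 0)
    (hκbar : ∃ κbar : ℝ, 0 < κbar ∧
      ∀ x : Fin n → ℝ, x ≠ 0 → x ⬝ᵥ (J2 + κbar ^ 2 • J4).mulVec x < 0) :
    Filter.Tendsto (fun κ : ℝ => (-(JR + κ ^ 2 • J2 + κ ^ 4 • J4)).det)
      Filter.atTop Filter.atTop := by
  obtain ⟨κ₀, hκ₀, hdef⟩ := hκbar
  obtain ⟨c, hc, hN⟩ := exists_pos_forall_mul_dotProduct_self_le (-(J2 + κ₀ ^ 2 • J4))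
    fun x hx => by rw [neg_mulVec, dotProduct_neg]; exact neg_pos.2 (hdef x hx)
  obtain ⟨C, hR⟩ := exists_forall_mul_dotProduct_self_le (-JR)
  have hμ : Tendsto (fun κ : ℝ => C + c * κ ^ 2) atTop atTop :=
    tendsto_atTop_add_const_left _ C ((tendsto_pow_atTop two_ne_zero).const_mul_atTop hc)
  have hbound : ∀ᶠ κ : ℝ in atTop,
      (C + c * κ ^ 2) ^ n ≤ (-(JR + κ ^ 2 • J2 + κ ^ 4 • J4)).det := by
    filter_upwards [eventually_ge_atTop κ₀, hμ.eventually_gt_atTop 0] with κ hκ hpos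
    simpa using pow_card_le_det_of_forall_mul_dotProduct_self_le _ hpos
      (add_mul_sq_mul_dotProduct_self_le hJ4nsd hR hN (pow_le_pow_left₀ hκ₀.le hκ 2))
  exact tendsto_atTop_mono' _ hbound ((tendsto_pow_atTop (by omega)).comp hμ)

/-- Under the assumptions of Lemma 1 (with `n ≥ 1`), the determinant
`det (-(J_R + κ² J₂ + κ⁴ J₄))` tends to `+∞` as `κ → +∞`. -/
theorem stmt5 (n : ℕ) (hn : 1 ≤ n) (JR J2 J4 : Matrix (Fin n) (Fin n) ℝ)
    (hJ2 : J2.IsSymm) (hJ4 : J4.IsSymm)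
    (hJ4nsd : ∀ x : Fin n → ℝ, x ⬝ᵥ J4.mulVec x ≤ 0)
    (hκbar : ∃ κbar : ℝ, 0 < κbar ∧
      ∀ x : Fin n → ℝ, x ≠ 0 → x ⬝ᵥ (J2 + κbar ^ 2 • J4).mulVec x < 0) :
    Filter.Tendsto (fun κ : ℝ => (-(JR + κ ^ 2 • J2 + κ ^ 4 • J4)).det)
      Filter.atTop Filter.atTop :=
  stmt5_general n hn JR J2 J4 hJ4nsd hκbar
end

section
/- Let p be a monic polynomial with real coefficients of degree n ≥ 2 such that 0 is a root of p of multiplicity exactly one and every other complex root of p has negative real part. Then the constant coefficient of p is zero and the coefficient of X¹ in p is strictly positive. -/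
open Polynomial

/-- Let `p` be a monic real polynomial of degree `n ≥ 2` such that `0` is a root of `p`
of multiplicity exactly one and every other complex root of `p` has negative real part.
Then the constant coefficient of `p` is zero and the coefficient of `X¹` is strictly
positive. -/
theorem stmt7 (n : ℕ) (hn : 2 ≤ n) (p : Polynomial ℝ)
    (hmonic : p.Monic) (hdeg : p.natDegree = n)
    (hmult : p.rootMultiplicity 0 = 1)
    (hroots : ∀ z : ℂ, (p.map (algebraMap ℝ ℂ)).IsRoot z → z ≠ 0 → z.re < 0) :
    p.coeff 0 = 0 ∧ 0 < p.coeff 1 := by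
  have hp0 : p ≠ 0 := hmonic.ne_zero
  set q := p /ₘ (X - C 0) ^ p.rootMultiplicity 0 with hq
  have hfac : (X - C 0) ^ p.rootMultiplicity 0 * q = p :=
    pow_mul_divByMonic_rootMultiplicity_eq p 0
  have hq0 : q.eval 0 ≠ 0 := eval_divByMonic_pow_rootMultiplicity_ne_zero 0 hp0
  rw [hmult] at hfac
  simp only [pow_one, map_zero, sub_zero] at hfac
  -- hfac : X * q = p
  have hqmonic : q.Monic := monic_X.of_mul_monic_left (hfac ▸ hmonic)
  have hqne : q ≠ 0 := hqmonic.ne_zero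
  have hndeg : 1 + q.natDegree = n := by
    rw [← hdeg, ← hfac, natDegree_mul X_ne_zero hqne, natDegree_X]
  have hqdeg : 1 ≤ q.natDegree := by omega
  -- coeff 0 = 0
  have hc0 : p.coeff 0 = 0 := by
    rw [← hfac]; simp [coeff_X_mul]  -- might need alternate
  have hc1 : p.coeff 1 = q.eval 0 := by
    rw [← hfac]
    have : (X * q).coeff (0 + 1) = q.coeff 0 := coeff_X_mul q 0
    simp only [zero_add] at this
    rw [this, coeff_zero_eq_eval_zero]
  -- no nonnegative real root of q
  have hnoroot : ∀ x : ℝ, 0 ≤ x → q.eval x ≠ 0 := by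
    intro x hx hroot
    have hxne : x ≠ 0 := by
      intro h; exact hq0 (h ▸ hroot)
    have hpx : p.eval x = 0 := by rw [← hfac]; simp [hroot]
    have hz : (p.map (algebraMap ℝ ℂ)).IsRoot (x : ℂ) := by
      rw [IsRoot, eval_map, ← Complex.coe_algebraMap, eval₂_at_apply, hpx, map_zero]
    have := hroots (x : ℂ) hz (by exact_mod_cast hxne)
    simp at this
    linarith
  -- q eventually positive
  have htend : Filter.Tendsto (fun x => q.eval x) Filter.atTop Filter.atTop := by
    apply tendsto_atTop_of_leadingCoeff_nonneg
    · rw [degree_eq_natDegree hqne]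
      exact_mod_cast hqdeg
    · rw [hqmonic.leadingCoeff]; norm_num
  obtain ⟨t, ht⟩ := (htend.eventually_gt_atTop 0).and (Filter.eventually_gt_atTop 0) |>.exists
  have h0 : 0 < q.eval 0 := by
    rcases lt_trichotomy (q.eval 0) 0 with h | h | h
    · exfalso
      obtain ⟨x, hxmem, hxval⟩ := intermediate_value_Icc (le_of_lt ht.2)
        (q.continuous_aeval.continuousOn (s := Set.Icc 0 t))
        (Set.mem_Icc.mpr ⟨le_of_lt h, le_of_lt ht.1⟩)
      exact hnoroot x hxmem.1 (by simpa using hxval)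
    · exact absurd h hq0
    · exact h
  exact ⟨hc0, hc1 ▸ h0⟩
end

section
/- (Lemma 2) Let B be a real n×m matrix, C a real m×n matrix, Δ ∈ ℝ^m, and let J₂, J₄ be real symmetric n×n matrices. Write J(κ) = B·diag(Δ)·C + κ² J₂ + κ⁴ J₄. Assume that the characteristic polynomial of B·diag(Δ)·C has 0 as a root of multiplicity exactly one and that all its other complex roots have negative real part. If the function κ ↦ det(−J(κ)) is initially positive (i.e., there exists κ̂ > 0 with det(−J(κ)) > 0 for all κ ∈ (0, κ̂)), then there exists κ̃ > 0 such that for every κ with 0 < κ ≤ κ̃, every eigenvalue of J(κ) has negative real part. -/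
/-!
The eigenvalues of `J(κ)` are the roots of its characteristic polynomial `p_κ`, whose
coefficients depend continuously on `κ`. Since `p_0` has a simple root at `0` and all its other
roots in the open left half-plane, for small `κ` every root of `p_κ` lies either in the left
half-plane or in a small disc around `0`, and that disc holds at most one root (counted with
multiplicity), because two small roots would force the coefficient of `X` in `p_κ` to be small,
whereas it is close to the nonzero coefficient of `X` in `p_0`. As `p_κ` is real, that root is
real (it is its own conjugate), say `t`, and `p_κ = (X - t) g` with `g` monic and all roots of
`g` in the left half-plane, so `g(0) > 0`. Hence the sign of `det (-J(κ)) = p_κ(0) = -t g(0)`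
is the sign of `-t`, and initial positivity gives `t < 0`.
-/

open Matrix Polynomial Filter Topology

namespace Polynomial

theorem coeff_one_X_sub_C_mul_X_sub_C_mul {R : Type*} [CommRing R] (a b : R) (H : R[X]) :
    ((X - C a) * (X - C b) * H).coeff 1 = a * b * H.coeff 1 - (a + b) * H.coeff 0 := by
  have : (X - C a) * (X - C b) * H = X ^ 2 * H - C (a + b) * (X * H) + C (a * b) * H := by
    simp only [map_add, map_mul]; ring
  rw [this, coeff_add, coeff_sub, coeff_X_pow_mul', coeff_C_mul, coeff_X_mul, coeff_C_mul]
  simp only [Nat.reduceLeDiff, if_false]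
  ring

theorem coeff_one_ne_zero_of_rootMultiplicity_zero_eq_one {R : Type*} [CommRing R] {p : R[X]}
    (h : p.rootMultiplicity 0 = 1) : p.coeff 1 ≠ 0 := by
  have hp : p ≠ 0 := by rintro rfl; simp at h
  have : p.natTrailingDegree = 1 := rootMultiplicity_eq_natTrailingDegree'.symm.trans h
  simpa [trailingCoeff, this] using trailingCoeff_nonzero_iff_nonzero.mpr hp

theorem Monic.eval_zero_pos_of_forall_re_neg {p : ℝ[X]} (hp : p.Monic)
    (hre : ∀ z : ℂ, (p.map (algebraMap ℝ ℂ)).IsRoot z → z.re < 0) : 0 < p.eval 0 := by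
  have hno : ∀ s : ℝ, 0 ≤ s → ¬ p.IsRoot s := fun s hs hps => by
    simpa using (hre _ ((isRoot_map_iff (algebraMap ℝ ℂ).injective).mpr hps)).trans_le hs
  rcases Nat.eq_zero_or_pos p.natDegree with hdeg | hdeg
  · simp [hp.natDegree_eq_zero.mp hdeg]
  have htop := p.tendsto_atTop_of_leadingCoeff_nonneg (natDegree_pos_iff_degree_pos.mp hdeg)
    (by simp [hp.leadingCoeff])
  obtain ⟨T, hT, hT0⟩ := ((htop.eventually_ge_atTop 0).and (eventually_ge_atTop 0)).exists
  by_contra! h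
  obtain ⟨s, hs, hps⟩ := intermediate_value_Icc hT0 p.continuous.continuousOn ⟨h, hT⟩
  exact hno s hs.1 hps

section NormedField

variable {𝕜 : Type*} [NormedField 𝕜]

theorem Monic.norm_le_of_isRoot {Q : 𝕜[X]} (hQ : Q.Monic) {z : 𝕜} (hz : Q.IsRoot z) :
    ‖z‖ ≤ 1 + ∑ i ∈ Finset.range Q.natDegree, ‖Q.coeff i‖ := by
  have hsup : (Finset.range Q.natDegree).sup (‖Q.coeff ·‖₊)
      ≤ ∑ i ∈ Finset.range Q.natDegree, ‖Q.coeff i‖₊ :=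
    Finset.sup_le fun i hi => Finset.single_le_sum (f := (‖Q.coeff ·‖₊)) (fun _ _ => zero_le) hi
  have hbound : ‖z‖₊ ≤ 1 + ∑ i ∈ Finset.range Q.natDegree, ‖Q.coeff i‖₊ := by
    refine (hz.norm_lt_cauchyBound hQ.ne_zero).le.trans ?_
    rw [cauchyBound, hQ.leadingCoeff, nnnorm_one, div_one, add_comm]
    gcongr
  simpa using NNReal.coe_le_coe.mpr hbound

theorem Monic.norm_le_of_isRoot_of_coeff_near {P Q : 𝕜[X]} (hQ : Q.Monic)
    (hdeg : Q.natDegree = P.natDegree) (hcoeff : ∀ i < P.natDegree, ‖Q.coeff i - P.coeff i‖ ≤ 1)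
    {z : 𝕜} (hz : Q.IsRoot z) : ‖z‖ ≤ 1 + ∑ i ∈ Finset.range P.natDegree, (‖P.coeff i‖ + 1) := by
  refine (hQ.norm_le_of_isRoot hz).trans ?_
  rw [hdeg]
  refine add_le_add_right (Finset.sum_le_sum fun i hi => ?_) 1
  linarith [norm_le_insert' (Q.coeff i) (P.coeff i), hcoeff i (Finset.mem_range.1 hi)]

theorem norm_eval_le_of_natDegree_le {Q : 𝕜[X]} {n : ℕ} (hQ : Q.natDegree ≤ n) {z : 𝕜}
    {R : ℝ} (hR : 1 ≤ R) (hz : ‖z‖ ≤ R) :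
    ‖Q.eval z‖ ≤ (∑ i ∈ Finset.range (n + 1), ‖Q.coeff i‖) * R ^ n := by
  rw [eval_eq_sum_range' (Nat.lt_succ_of_le hQ), Finset.sum_mul]
  refine (norm_sum_le _ _).trans (Finset.sum_le_sum fun i hi => ?_)
  rw [norm_mul, norm_pow]
  gcongr
  calc ‖z‖ ^ i ≤ R ^ i := by gcongr
    _ ≤ R ^ n := pow_le_pow_right₀ hR (Nat.lt_succ_iff.mp (Finset.mem_range.mp hi))

variable [IsAlgClosed 𝕜]

theorem Monic.exists_mem_roots_norm_sub_lt {P : 𝕜[X]} (hP : P.Monic) {z : 𝕜} {δ : ℝ}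
    (hδ : 0 ≤ δ) (h : ‖P.eval z‖ < δ ^ P.natDegree) : ∃ r ∈ P.roots, ‖z - r‖ < δ := by
  by_contra! hfar
  have hs := IsAlgClosed.splits P
  rw [hs.eval_eq_prod_roots_of_monic hP, hs.natDegree_eq_card_roots, ← normHom_apply,
    map_multiset_prod, Multiset.map_map] at h
  refine h.not_ge ?_
  calc δ ^ P.roots.card = (P.roots.map fun _ => δ).prod := by simp
    _ ≤ _ := Multiset.prod_map_le_prod_map₀ _ _ (fun _ _ => hδ) hfar

theorem Monic.exists_mem_roots_norm_sub_lt_of_coeff_near {P Q : 𝕜[X]} (hP : P.Monic)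
    (hdeg : Q.natDegree ≤ P.natDegree) {ε δ R : ℝ} (hδ : 0 ≤ δ) (hR : 1 ≤ R)
    (hcoeff : ∀ i ≤ P.natDegree, ‖Q.coeff i - P.coeff i‖ < ε)
    (hεδ : (P.natDegree + 1) * ε * R ^ P.natDegree < δ ^ P.natDegree)
    {z : 𝕜} (hz : Q.IsRoot z) (hzR : ‖z‖ ≤ R) : ∃ r ∈ P.roots, ‖z - r‖ < δ := by
  set n := P.natDegree
  have hsum : ∑ i ∈ Finset.range (n + 1), ‖(P - Q).coeff i‖ < (n + 1) * ε :=
    calc ∑ i ∈ Finset.range (n + 1), ‖(P - Q).coeff i‖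
        < ∑ i ∈ Finset.range (n + 1), ε := Finset.sum_lt_sum_of_nonempty (by simp) fun i hi => by
          rw [coeff_sub, norm_sub_rev]; exact hcoeff i (Nat.lt_succ_iff.1 (Finset.mem_range.1 hi))
      _ = (n + 1) * ε := by simp
  refine hP.exists_mem_roots_norm_sub_lt hδ ?_
  calc ‖P.eval z‖ = ‖(P - Q).eval z‖ := by rw [eval_sub, hz.eq_zero, sub_zero]
    _ ≤ (∑ i ∈ Finset.range (n + 1), ‖(P - Q).coeff i‖) * R ^ n :=
      norm_eval_le_of_natDegree_le ((natDegree_sub_le P Q).trans (max_le le_rfl hdeg)) hR hzR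
    _ < (n + 1) * ε * R ^ n := by gcongr
    _ < δ ^ n := hεδ

theorem Monic.norm_coeff_one_le_of_X_sub_C_mul_X_sub_C_dvd {Q : 𝕜[X]} (hQ : Q.Monic) {R : ℝ}
    (hR : ∀ z ∈ Q.roots, ‖z‖ ≤ R) {a b : 𝕜} (hab : (X - C a) * (X - C b) ∣ Q) :
    ‖Q.coeff 1‖ ≤ (‖a‖ * ‖b‖ + ‖a‖ + ‖b‖) *
      (max R 1 ^ Q.natDegree * Q.natDegree.choose (Q.natDegree / 2)) := by
  obtain ⟨H, hQH⟩ := hab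
  set M := max R 1 ^ Q.natDegree * (Q.natDegree.choose (Q.natDegree / 2) : ℝ)
  have hHdvd : H ∣ Q := hQH ▸ dvd_mul_left _ _
  have hH : H.Monic := ((monic_X_sub_C a).mul (monic_X_sub_C b)).of_mul_monic_left (hQH ▸ hQ)
  have hHcoeff (i : ℕ) : ‖H.coeff i‖ ≤ M := by
    simpa using coeff_bdd_of_roots_le (RingHom.id 𝕜) hH (by simpa using IsAlgClosed.splits H)
      (natDegree_le_of_dvd hHdvd hQ.ne_zero)
      (by simpa using fun z hz => hR z (Multiset.mem_of_le (roots.le_of_dvd hQ.ne_zero hHdvd) hz)) i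
  rw [hQH, coeff_one_X_sub_C_mul_X_sub_C_mul]
  calc ‖a * b * H.coeff 1 - (a + b) * H.coeff 0‖
      ≤ ‖a‖ * ‖b‖ * ‖H.coeff 1‖ + (‖a‖ + ‖b‖) * ‖H.coeff 0‖ := by
        refine (norm_sub_le _ _).trans ?_
        rw [norm_mul, norm_mul, norm_mul]
        gcongr
        exact norm_add_le _ _
    _ ≤ ‖a‖ * ‖b‖ * M + (‖a‖ + ‖b‖) * M := by gcongr <;> apply hHcoeff
    _ = _ := by ring

theorem Monic.not_X_sub_C_mul_X_sub_C_dvd {Q : 𝕜[X]} (hQ : Q.Monic) {R δ : ℝ}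
    (hR : ∀ z ∈ Q.roots, ‖z‖ ≤ R) (hδ : δ ≤ 1)
    (hcoeff : 3 * δ * (max R 1 ^ Q.natDegree * Q.natDegree.choose (Q.natDegree / 2)) < ‖Q.coeff 1‖)
    {a b : 𝕜} (ha : ‖a‖ < δ) (hb : ‖b‖ < δ) : ¬ (X - C a) * (X - C b) ∣ Q := fun hab => by
  have hbound := hQ.norm_coeff_one_le_of_X_sub_C_mul_X_sub_C_dvd hR hab
  have hsmall : ‖a‖ * ‖b‖ + ‖a‖ + ‖b‖ ≤ 3 * δ := by nlinarith [norm_nonneg a, norm_nonneg b]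
  have hM : 0 ≤ max R 1 ^ Q.natDegree * (Q.natDegree.choose (Q.natDegree / 2) : ℝ) := by
    positivity
  nlinarith

end NormedField

theorem Monic.exists_isRoot_norm_lt_or_re_neg_of_coeff_near {P : ℂ[X]} (hP : P.Monic)
    (hmult : P.rootMultiplicity 0 = 1) (hre : ∀ z, P.IsRoot z → z ≠ 0 → z.re < 0) :
    ∃ ε > 0, ∃ δ : ℝ, ∀ Q : ℂ[X], Q.Monic → Q.natDegree = P.natDegree →
      (∀ i ≤ P.natDegree, ‖Q.coeff i - P.coeff i‖ < ε) →
      (∀ z, Q.IsRoot z → ‖z‖ < δ ∨ z.re < 0) ∧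
        ∀ a b : ℂ, ‖a‖ < δ → ‖b‖ < δ → ¬ (X - C a) * (X - C b) ∣ Q := by
  set n := P.natDegree
  have hb := coeff_one_ne_zero_of_rootMultiplicity_zero_eq_one hmult
  have hn : 1 ≤ n := le_natDegree_of_ne_zero hb
  -- `R` bounds the roots of every `Q` whose coefficients are within `1` of those of `P`,
  -- and `M` then bounds the coefficients of the monic factors of such a `Q`.
  set R := 1 + ∑ i ∈ Finset.range n, (‖P.coeff i‖ + 1)
  have hR : 1 ≤ R := le_add_of_nonneg_right (by positivity)
  set M := max R 1 ^ n * (n.choose (n / 2) : ℝ)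
  have hgap : ∀ᶠ δ in 𝓝 (0 : ℝ), ∀ r ∈ P.roots.toFinset, r ≠ 0 → δ < -r.re := by
    refine (eventually_all_finset _).2 fun r hr => ?_
    by_cases hr0 : r = 0
    · exact .of_forall fun _ h => (h hr0).elim
    · have := hre r ((mem_roots hP.ne_zero).1 (Multiset.mem_toFinset.1 hr)) hr0
      exact (eventually_lt_nhds (neg_pos.2 this)).mono fun _ h _ => h
  obtain ⟨δ, ⟨hδ1, hδM, hδroots⟩, hδ0⟩ : ∃ δ : ℝ, (δ ≤ 1 ∧ 3 * δ * M < ‖P.coeff 1‖ / 2 ∧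
      ∀ r ∈ P.roots.toFinset, r ≠ 0 → δ < -r.re) ∧ 0 < δ :=
    (((eventually_le_nhds one_pos).and ((ContinuousAt.eventually_lt (by fun_prop) (by fun_prop)
      (by simpa using hb)).and hgap)).filter_mono nhdsWithin_le_nhds |>.and
      self_mem_nhdsWithin).exists (f := 𝓝[>] 0)
  obtain ⟨ε, ⟨hε1, hεb, hεδ⟩, hε0⟩ : ∃ ε : ℝ, (ε ≤ 1 ∧ ε ≤ ‖P.coeff 1‖ / 2 ∧
      (n + 1) * ε * R ^ n < δ ^ n) ∧ 0 < ε :=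
    (((eventually_le_nhds one_pos).and ((eventually_le_nhds (by positivity)).and
      (ContinuousAt.eventually_lt (by fun_prop) (by fun_prop) (by simpa using pow_pos hδ0 n))))
      |>.filter_mono nhdsWithin_le_nhds |>.and self_mem_nhdsWithin).exists (f := 𝓝[>] 0)
  refine ⟨ε, hε0, δ, fun Q hQ hdeg hcoeff => ?_⟩
  have hQR : ∀ z, Q.IsRoot z → ‖z‖ ≤ R :=
    fun z => hQ.norm_le_of_isRoot_of_coeff_near hdeg fun i hi => (hcoeff i hi.le).le.trans hε1
  refine ⟨fun z hz => ?_, fun a b ha hb => ?_⟩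
  · obtain ⟨r, hr, hzr⟩ := hP.exists_mem_roots_norm_sub_lt_of_coeff_near hdeg.le hδ0.le hR
      hcoeff hεδ hz (hQR z hz)
    by_cases hr0 : r = 0
    · exact .inl (by simpa [hr0] using hzr)
    · have hzr_re := Complex.re_le_norm (z - r)
      rw [Complex.sub_re] at hzr_re
      exact .inr (by linarith [hδroots r (Multiset.mem_toFinset.2 hr) hr0])
  · refine hQ.not_X_sub_C_mul_X_sub_C_dvd (fun z hz => hQR z ((mem_roots hQ.ne_zero).1 hz)) hδ1
      ?_ ha hb
    rw [hdeg]
    linarith [norm_le_insert' (P.coeff 1) (Q.coeff 1), norm_sub_rev (P.coeff 1) (Q.coeff 1),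
      hcoeff 1 hn]

theorem Monic.forall_re_neg_of_no_two_small_roots {q : ℝ[X]} (hq : q.Monic) (h0 : 0 < q.eval 0)
    {δ : ℝ} (hroots : ∀ z : ℂ, (q.map (algebraMap ℝ ℂ)).IsRoot z → ‖z‖ < δ ∨ z.re < 0)
    (hpair : ∀ a b : ℂ, ‖a‖ < δ → ‖b‖ < δ → ¬ (X - C a) * (X - C b) ∣ q.map (algebraMap ℝ ℂ))
    (z : ℂ) (hz : (q.map (algebraMap ℝ ℂ)).IsRoot z) : z.re < 0 := by
  refine (hroots z hz).elim (fun hsmall => ?_) id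
  have him : z.im = 0 := by
    by_contra him
    refine hpair _ _ (by simpa using hsmall) hsmall
      (q.mul_star_dvd_of_aeval_eq_zero_im_ne_zero ?_ him)
    simpa [aeval_def, eval_map] using hz
  set t := z.re
  have hzt : z = (t : ℂ) := Complex.ext rfl (by simpa using him)
  have ht : q.IsRoot t := by
    rw [hzt] at hz
    exact (isRoot_map_iff (algebraMap ℝ ℂ).injective).mp hz
  set g := q /ₘ (X - C t)
  have hqg : (X - C t) * g = q := mul_divByMonic_eq_iff_isRoot.mpr ht
  have hg : g.Monic := (monic_X_sub_C t).of_mul_monic_left (hqg ▸ hq)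
  have hgre : ∀ w : ℂ, (g.map (algebraMap ℝ ℂ)).IsRoot w → w.re < 0 := by
    intro w hw
    have hdvd : (X - C z) * (X - C w) ∣ q.map (algebraMap ℝ ℂ) := by
      rw [← hqg, Polynomial.map_mul, hzt]
      exact mul_dvd_mul (by simp) (dvd_iff_isRoot.mpr hw)
    refine (hroots w ?_).resolve_left fun hw' => hpair z w hsmall hw' hdvd
    exact dvd_iff_isRoot.mp ((dvd_mul_left _ _).trans hdvd)
  have hg0 := hg.eval_zero_pos_of_forall_re_neg hgre
  rw [← hqg, eval_mul] at h0
  simp only [eval_sub, eval_X, eval_C, zero_sub, neg_mul] at h0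
  show t < 0
  nlinarith

theorem Monic.exists_forall_re_neg_of_coeff_near {p : ℝ[X]} (hp : p.Monic)
    (hmult : (p.map (algebraMap ℝ ℂ)).rootMultiplicity 0 = 1)
    (hre : ∀ z : ℂ, (p.map (algebraMap ℝ ℂ)).IsRoot z → z ≠ 0 → z.re < 0) :
    ∃ ε > 0, ∀ q : ℝ[X], q.Monic → q.natDegree = p.natDegree →
      (∀ i ≤ p.natDegree, |q.coeff i - p.coeff i| < ε) → 0 < q.eval 0 →
      ∀ z : ℂ, (q.map (algebraMap ℝ ℂ)).IsRoot z → z.re < 0 := by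
  obtain ⟨ε, hε, δ, hδ⟩ :=
    (hp.map (algebraMap ℝ ℂ)).exists_isRoot_norm_lt_or_re_neg_of_coeff_near hmult hre
  refine ⟨ε, hε, fun q hq hdeg hcoeff h0 => ?_⟩
  rw [hp.natDegree_map] at hδ
  obtain ⟨hnear, hpair⟩ := hδ _ (hq.map (algebraMap ℝ ℂ)) (by rw [hq.natDegree_map, hdeg])
    fun i hi => by simpa [← Complex.ofReal_sub] using hcoeff i hi
  exact hq.forall_re_neg_of_no_two_small_roots h0 hnear hpair

end Polynomial

theorem Matrix.continuous_charpoly_coeff {R n : Type*} [CommRing R] [TopologicalSpace R]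
    [IsTopologicalRing R] [Fintype n] [DecidableEq n] (i : ℕ) :
    Continuous fun M : Matrix n n R => M.charpoly.coeff i := by
  have := (MvPolynomial.continuous_eval ((charpoly.univ R n).coeff i)).comp
    (f := fun M : Matrix n n R => fun ij : n × n => M ij.1 ij.2) (by fun_prop)
  convert this using 2 with M
  rw [Function.comp_apply, MvPolynomial.eval, charpoly.univ_coeff_eval₂Hom]
  rfl

theorem stmt8_general (n m : ℕ) (B : Matrix (Fin n) (Fin m) ℝ) (C : Matrix (Fin m) (Fin n) ℝ)
    (Δ : Fin m → ℝ) (J2 J4 : Matrix (Fin n) (Fin n) ℝ)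
    (hmult : (((B * Matrix.diagonal Δ * C).charpoly).map
        (algebraMap ℝ ℂ)).rootMultiplicity 0 = 1)
    (hroots : ∀ z : ℂ, (((B * Matrix.diagonal Δ * C).charpoly).map
        (algebraMap ℝ ℂ)).IsRoot z → z ≠ 0 → z.re < 0)
    (hpos : ∃ κhat : ℝ, 0 < κhat ∧ ∀ κ : ℝ, 0 < κ → κ < κhat →
      0 < (-(B * Matrix.diagonal Δ * C + κ ^ 2 • J2 + κ ^ 4 • J4)).det) :
    ∃ κtil : ℝ, 0 < κtil ∧ ∀ κ : ℝ, 0 < κ → κ ≤ κtil → ∀ μ : ℂ,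
      (((B * Matrix.diagonal Δ * C + κ ^ 2 • J2 + κ ^ 4 • J4).charpoly).map
        (algebraMap ℝ ℂ)).IsRoot μ → μ.re < 0 := by
  set A := B * Matrix.diagonal Δ * C
  set J : ℝ → Matrix (Fin n) (Fin n) ℝ := fun κ => A + κ ^ 2 • J2 + κ ^ 4 • J4
  obtain ⟨κhat, hκhat, hdet⟩ := hpos
  obtain ⟨ε, hε, hstable⟩ := A.charpoly_monic.exists_forall_re_neg_of_coeff_near hmult hroots
  have hnear : ∀ᶠ κ in 𝓝 0, ∀ i ∈ Finset.range (A.charpoly.natDegree + 1),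
      |(J κ).charpoly.coeff i - A.charpoly.coeff i| < ε := by
    refine (eventually_all_finset _).2 fun i _ => ?_
    have hcont : Continuous fun κ => (J κ).charpoly.coeff i :=
      (Matrix.continuous_charpoly_coeff i).comp (by fun_prop)
    have := (hcont.tendsto 0).eventually (Metric.ball_mem_nhds _ hε)
    simpa [← Real.dist_eq, J] using this
  obtain ⟨η, hη, hball⟩ := Metric.eventually_nhds_iff.1 hnear
  refine ⟨min (η / 2) (κhat / 2), by positivity, fun κ hκ hκle => hstable _ (charpoly_monic _)
    (by simp only [charpoly_natDegree_eq_dim]) (fun i hi => hball ?_ i (by simpa using hi)) ?_⟩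
  · rw [Real.dist_eq, sub_zero, abs_of_pos hκ]
    linarith [min_le_left (η / 2) (κhat / 2)]
  · rw [eval_charpoly, map_zero, zero_sub]
    exact hdet κ hκ (by linarith [min_le_right (η / 2) (κhat / 2)])

/-- (Lemma 2) Write `J(κ) = B ⬝ diag(Δ) ⬝ C + κ² J₂ + κ⁴ J₄`, with `J₂, J₄` real
symmetric.  Assume that the characteristic polynomial of `B ⬝ diag(Δ) ⬝ C` has `0`
as a root of multiplicity exactly one and all its other complex roots have negative
real part.  If `κ ↦ det (-J(κ))` is initially positive, then there is `κ̃ > 0` such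
that for all `0 < κ ≤ κ̃` every eigenvalue of `J(κ)` has negative real part. -/
theorem stmt8 (n m : ℕ) (B : Matrix (Fin n) (Fin m) ℝ) (C : Matrix (Fin m) (Fin n) ℝ)
    (Δ : Fin m → ℝ) (J2 J4 : Matrix (Fin n) (Fin n) ℝ)
    (hJ2 : J2.IsSymm) (hJ4 : J4.IsSymm)
    (hmult : (((B * Matrix.diagonal Δ * C).charpoly).map
        (algebraMap ℝ ℂ)).rootMultiplicity 0 = 1)
    (hroots : ∀ z : ℂ, (((B * Matrix.diagonal Δ * C).charpoly).map
        (algebraMap ℝ ℂ)).IsRoot z → z ≠ 0 → z.re < 0)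
    (hpos : ∃ κhat : ℝ, 0 < κhat ∧ ∀ κ : ℝ, 0 < κ → κ < κhat →
      0 < (-(B * Matrix.diagonal Δ * C + κ ^ 2 • J2 + κ ^ 4 • J4)).det) :
    ∃ κtil : ℝ, 0 < κtil ∧ ∀ κ : ℝ, 0 < κ → κ ≤ κtil → ∀ μ : ℂ,
      (((B * Matrix.diagonal Δ * C + κ ^ 2 • J2 + κ ^ 4 • J4).charpoly).map
        (algebraMap ℝ ℂ)).IsRoot μ → μ.re < 0 :=
  stmt8_general n m B C Δ J2 J4 hmult hroots hpos
end

section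
/- (Theorem 1, necessary condition) Let B be a real n×m matrix, C a real m×n matrix, J₂ and J₄ real n×n matrices, and let 𝒟 = {Δ ∈ ℝ^m : Δⱼ⁻ ≤ Δⱼ ≤ Δⱼ⁺ for all j} with 0 ≤ Δⱼ⁻ ≤ Δⱼ⁺. Write J(Δ,κ) = B·diag(Δ)·C + κ² J₂ + κ⁴ J₄. If there exists Δ ∈ 𝒟 exhibiting microphase separation, then there exists κ̂ > 0 such that for every κ ∈ (0, κ̂) there exists Δ ∈ 𝒟 with det(−J(Δ,κ)) > 0 (i.e., Ψ⁺(κ) = max over Δ∈𝒟 of det(−J(Δ,κ)) is initially positive). -/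
open Matrix Polynomial

/-- The combined Jacobian `J(Δ,κ) = B ⬝ diag(Δ) ⬝ C + κ² J₂ + κ⁴ J₄`. -/
noncomputable def Jmat {n m : ℕ} (B : Matrix (Fin n) (Fin m) ℝ) (C : Matrix (Fin m) (Fin n) ℝ)
    (J2 J4 : Matrix (Fin n) (Fin n) ℝ) (Δ : Fin m → ℝ) (κ : ℝ) : Matrix (Fin n) (Fin n) ℝ :=
  B * Matrix.diagonal Δ * C + κ ^ 2 • J2 + κ ^ 4 • J4

/-- Every eigenvalue of the real matrix `M` (root in `ℂ` of its characteristic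
polynomial) has negative real part. -/
def AllEigNegRe {n : ℕ} (M : Matrix (Fin n) (Fin n) ℝ) : Prop :=
  ∀ μ : ℂ, ((M.charpoly).map (algebraMap ℝ ℂ)).IsRoot μ → μ.re < 0

/-- Some eigenvalue of the real matrix `M` has positive real part. -/
def SomeEigPosRe {n : ℕ} (M : Matrix (Fin n) (Fin n) ℝ) : Prop :=
  ∃ μ : ℂ, ((M.charpoly).map (algebraMap ℝ ℂ)).IsRoot μ ∧ 0 < μ.re

/-- The parameter `Δ` exhibits microphase separation: there exist
`0 < κ̂ < κ₁ < κ₂` such that all eigenvalues of `J(Δ,κ)` have negative real part for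
`κ ∈ (0,κ̂)`, some eigenvalue of `J(Δ,κ₁)` has positive real part, and all eigenvalues
of `J(Δ,κ₂)` have negative real part. -/
def Microphase {n m : ℕ} (B : Matrix (Fin n) (Fin m) ℝ) (C : Matrix (Fin m) (Fin n) ℝ)
    (J2 J4 : Matrix (Fin n) (Fin n) ℝ) (Δ : Fin m → ℝ) : Prop :=
  ∃ κhat κ1 κ2 : ℝ, 0 < κhat ∧ κhat < κ1 ∧ κ1 < κ2 ∧
    (∀ κ : ℝ, 0 < κ → κ < κhat → AllEigNegRe (Jmat B C J2 J4 Δ κ)) ∧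
    SomeEigPosRe (Jmat B C J2 J4 Δ κ1) ∧
    AllEigNegRe (Jmat B C J2 J4 Δ κ2)


lemma det_neg_pos_of_allEigNegRe {n : ℕ} (M : Matrix (Fin n) (Fin n) ℝ)
    (h : ∀ μ : ℂ, ((M.charpoly).map (algebraMap ℝ ℂ)).IsRoot μ → μ.re < 0) :
    0 < (-M).det := by
  have key : ∀ x : ℝ, 0 ≤ x → M.charpoly.eval x ≠ 0 := by
    intro x hx hroot
    have : ((M.charpoly).map (algebraMap ℝ ℂ)).IsRoot (x : ℂ) := by
      rw [IsRoot, eval_map, show ((x:ℂ)) = algebraMap ℝ ℂ x from rfl, eval₂_at_apply, hroot, map_zero]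
    have := h _ this
    simp at this
    linarith
  have hdet : (-M).det = M.charpoly.eval 0 := by
    rw [Matrix.det_neg, Matrix.det_eq_sign_charpoly_coeff, ← mul_assoc, ← mul_pow]
    simp [Polynomial.coeff_zero_eq_eval_zero]
  rw [hdet]
  rcases Nat.eq_zero_or_pos n with hn | hn
  · subst hn
    simp [Matrix.charpoly, Matrix.det_fin_zero]
  · by_contra hle
    push_neg at hle
    have h0 : M.charpoly.eval 0 < 0 :=
      lt_of_le_of_ne hle (key 0 le_rfl)
    have hdeg : 0 < M.charpoly.degree := by
      rw [Matrix.charpoly_degree_eq_dim]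
      simpa using hn
    have htop : Filter.Tendsto (fun x => M.charpoly.eval x) Filter.atTop Filter.atTop :=
      Polynomial.tendsto_atTop_of_leadingCoeff_nonneg _ hdeg
        (by simp [M.charpoly_monic.leadingCoeff])
    obtain ⟨b, hb1, hb0⟩ :=
      ((htop.eventually (Filter.eventually_ge_atTop 1)).and
        (Filter.eventually_ge_atTop 0)).exists
    have hsub := intermediate_value_Icc hb0
      (M.charpoly.continuous.continuousOn : ContinuousOn (fun x => M.charpoly.eval x) _)
    have h0mem : (0:ℝ) ∈ Set.Icc (M.charpoly.eval 0) (M.charpoly.eval b) :=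
      ⟨le_of_lt h0, by linarith⟩
    obtain ⟨c, hc, hceq⟩ := hsub h0mem
    exact key c hc.1 hceq

/-- (Theorem 1, necessary condition) If some `Δ ∈ 𝒟` exhibits microphase separation,
then `Ψ⁺(κ) = max_{Δ ∈ 𝒟} det (-J(Δ,κ))` is initially positive: there exists `κ̂ > 0`
such that for every `κ ∈ (0,κ̂)` there is `Δ ∈ 𝒟` with `det (-J(Δ,κ)) > 0`. -/
theorem stmt9 (n m : ℕ) (B : Matrix (Fin n) (Fin m) ℝ) (C : Matrix (Fin m) (Fin n) ℝ)
    (J2 J4 : Matrix (Fin n) (Fin n) ℝ)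
    (Δlo Δhi : Fin m → ℝ) (hbounds : ∀ j, 0 ≤ Δlo j ∧ Δlo j ≤ Δhi j)
    (hMS : ∃ Δ : Fin m → ℝ, (∀ j, Δlo j ≤ Δ j ∧ Δ j ≤ Δhi j) ∧ Microphase B C J2 J4 Δ) :
    ∃ κhat : ℝ, 0 < κhat ∧ ∀ κ : ℝ, 0 < κ → κ < κhat →
      ∃ Δ : Fin m → ℝ, (∀ j, Δlo j ≤ Δ j ∧ Δ j ≤ Δhi j) ∧
        0 < (-(Jmat B C J2 J4 Δ κ)).det := by
  obtain ⟨Δ, hΔ, κhat, κ1, κ2, h0, _, _, hall, _, _⟩ := hMS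
  exact ⟨κhat, h0, fun κ hκ hκ' =>
    ⟨Δ, hΔ, det_neg_pos_of_allEigNegRe _ (hall κ hκ hκ')⟩⟩
end

section
/- (Theorem 3, robust sufficient condition) Let B be a real n×m matrix, C a real m×n matrix, and let 𝒟 = {Δ ∈ ℝ^m : Δⱼ⁻ ≤ Δⱼ ≤ Δⱼ⁺ for all j} with 0 ≤ Δⱼ⁻ ≤ Δⱼ⁺. Let J₂, J₄ be real symmetric n×n matrices with J₄ negative semidefinite and J₂ + κ̄² J₄ negative definite for some κ̄ > 0. Write J(Δ,κ) = B·diag(Δ)·C + κ² J₂ + κ⁴ J₄. Assume that for every Δ ∈ 𝒟, the characteristic polynomial of B·diag(Δ)·C has 0 as a root of multiplicity exactly one and all its other complex roots have negative real part. If there exists κ̂ > 0 such that det(−J(Δ,κ)) > 0 for all κ ∈ (0, κ̂) and all Δ ∈ 𝒟 (Ψ⁻ initially positive), and there exists κ₂ > 0 such that det(−J(Δ,κ₂)) < 0 for all Δ ∈ 𝒟 (Ψ⁺ has a negative sign change), then every Δ ∈ 𝒟 exhibits microphase separation. -/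
open Matrix Polynomial

/-!
For small `κ`, `J(Δ,κ)` is a small perturbation of `A = B ⬝ diag(Δ) ⬝ C`, whose spectrum is a
simple eigenvalue `0` plus eigenvalues in the open left half-plane. By continuity of the roots,
every eigenvalue of `J(Δ,κ)` in the closed right half-plane is close to `0`; since the
characteristic polynomial is real and positive at `0` (this is `det (-J) > 0`), such an
eigenvalue comes with a second one there (its conjugate, or a second positive root), and in the
limit `0` would be a double root of the characteristic polynomial of `A`. At `κ₂`,
`det (-J) < 0` means the monic characteristic polynomial is negative at `0`, so it has a positive
root. For large `κ`, the term `κ² (J₂ + κ̄² J₄)` makes `J` negative definite, which forces every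
eigenvalue into the open left half-plane.
-/

open Filter Topology

namespace Polynomial

section DivDiff

variable {R : Type*} [CommRing R]

/-- The divided difference `(p(a) - p(b)) / (a - b)`, written as a polynomial expression in `a`,
`b` and the coefficients of `p`: it is continuous in all of them and equals `p'(a)` when
`a = b`. -/
noncomputable def divDiff (p : R[X]) (a b : R) : R :=
  ∑ k ∈ Finset.range (p.natDegree + 1), p.coeff k * ∑ i ∈ Finset.range k, a ^ i * b ^ (k - 1 - i)

theorem eval_sub_eval_eq_divDiff_mul (p : R[X]) (a b : R) :
    p.eval a - p.eval b = divDiff p a b * (a - b) := by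
  rw [eval_eq_sum_range, eval_eq_sum_range, divDiff, Finset.sum_mul, ← Finset.sum_sub_distrib]
  refine Finset.sum_congr rfl fun k _ => ?_
  rw [mul_assoc, geom_sum₂_mul, mul_sub]

theorem divDiff_self (p : R[X]) (a : R) : divDiff p a a = p.derivative.eval a := by
  have hgeom (k : ℕ) : ∑ i ∈ Finset.range k, a ^ i * a ^ (k - 1 - i) = k * a ^ (k - 1) := by
    rw [Finset.sum_congr rfl fun i hi => by
        rw [← pow_add, Nat.add_sub_of_le (Nat.le_sub_one_of_lt (Finset.mem_range.1 hi))],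
      Finset.sum_const, Finset.card_range, nsmul_eq_mul]
  simp only [divDiff, hgeom, derivative_eval, ← mul_assoc]
  exact (sum_over_range p (f := fun n c => c * n * a ^ (n - 1)) fun n => by simp).symm

theorem divDiff_zero_zero (p : R[X]) : divDiff p 0 0 = p.coeff 1 := by
  rw [divDiff_self, ← coeff_zero_eq_eval_zero, coeff_derivative]
  simp

end DivDiff

theorem divDiff_eq_zero_of_dvd {K : Type*} [Field K] {p : K[X]} {a b : K}
    (h : (X - C a) * (X - C b) ∣ p) : divDiff p a b = 0 := by
  obtain ⟨t, rfl⟩ := h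
  rcases eq_or_ne a b with rfl | hab
  · rw [divDiff_self]
    simp [derivative_mul]
  · have := eval_sub_eval_eq_divDiff_mul ((X - C a) * (X - C b) * t) a b
    simp only [eval_mul, eval_sub, eval_X, eval_C, sub_self, zero_mul, mul_zero] at this
    exact (mul_eq_zero.1 this.symm).resolve_right (sub_ne_zero.2 hab)

theorem Monic.exists_pos_isRoot_of_eval_zero_neg {p : ℝ[X]} (hp : p.Monic) (h0 : p.eval 0 < 0) :
    ∃ x, 0 < x ∧ p.IsRoot x := by
  have hdeg : 0 < p.degree := by
    by_contra! h
    rw [hp.degree_le_zero_iff_eq_one.1 h, eval_one] at h0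
    linarith
  have htop : Tendsto (fun x => p.eval x) atTop atTop :=
    tendsto_atTop_of_leadingCoeff_nonneg p hdeg (by rw [hp.leadingCoeff]; exact zero_le_one)
  exact intermediate_value_Ioi p.continuous.continuousOn htop h0

theorem X_sub_C_mul_X_sub_C_dvd {R : Type*} [Field R] {p : R[X]} {a b : R} (hab : a ≠ b)
    (ha : p.IsRoot a) (hb : p.IsRoot b) : (X - C a) * (X - C b) ∣ p :=
  (isCoprime_X_sub_C_of_isUnit_sub (sub_ne_zero.2 hab).isUnit).mul_dvd
    (dvd_iff_isRoot.2 ha) (dvd_iff_isRoot.2 hb)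

theorem Monic.exists_X_sub_C_mul_X_sub_C_dvd {r : ℝ[X]} (hr : r.Monic) (h0 : 0 < r.eval 0)
    {μ : ℂ} (hμ : (r.map (algebraMap ℝ ℂ)).IsRoot μ) (hμre : 0 ≤ μ.re) :
    ∃ a b : ℂ, 0 ≤ a.re ∧ 0 ≤ b.re ∧ (X - C a) * (X - C b) ∣ r.map (algebraMap ℝ ℂ) := by
  by_cases him : μ.im = 0
  · have hroot : r.IsRoot μ.re := by
      rwa [show μ = algebraMap ℝ ℂ μ.re from Complex.ext rfl (by simpa using him),
        isRoot_map_iff (algebraMap ℝ ℂ).injective] at hμ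
    have hpos : 0 < μ.re := hμre.lt_of_ne fun h => by rw [← h] at hroot; exact h0.ne' hroot
    -- `r = (X - μ.re) s` with `s(0) < 0`, so `s` has a positive root as well.
    obtain ⟨s, hs⟩ := dvd_iff_isRoot.2 hroot
    have hs0 : s.eval 0 < 0 := by
      rw [hs, eval_mul, eval_sub, eval_X, eval_C, zero_sub] at h0
      nlinarith
    obtain ⟨y, hy, hys⟩ :=
      ((monic_X_sub_C _).of_mul_monic_left (hs ▸ hr)).exists_pos_isRoot_of_eval_zero_neg hs0
    obtain ⟨t, ht⟩ := dvd_iff_isRoot.2 hys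
    refine ⟨μ.re, y, by simpa using hpos.le, by simpa using hy.le, ⟨t.map (algebraMap ℝ ℂ), ?_⟩⟩
    rw [hs, ht]
    simp [Polynomial.map_mul, Polynomial.map_sub, mul_assoc]
  · have hconj : (r.map (algebraMap ℝ ℂ)).IsRoot (Complex.conjAe μ) := by
      rw [IsRoot, eval_map_algebraMap] at hμ ⊢
      rw [aeval_algHom_apply, hμ, map_zero]
    refine ⟨μ, Complex.conjAe μ, hμre, by simpa using hμre, X_sub_C_mul_X_sub_C_dvd ?_ hμ hconj⟩
    exact fun h => him (Complex.conj_eq_iff_im.1 (by simpa using h.symm))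

section Convergence

variable {ι R : Type*} [CommRing R] [TopologicalSpace R] [IsTopologicalRing R] {l : Filter ι}
  {P : ι → R[X]} {Q : R[X]} {n : ℕ}

theorem tendsto_eval_of_tendsto_coeff (hP : ∀ i, (P i).natDegree = n) (hQ : Q.natDegree = n)
    (hconv : ∀ k, Tendsto (fun i => (P i).coeff k) l (𝓝 (Q.coeff k)))
    {z : ι → R} {z₀ : R} (hz : Tendsto z l (𝓝 z₀)) :
    Tendsto (fun i => (P i).eval (z i)) l (𝓝 (Q.eval z₀)) := by
  simp only [eval_eq_sum_range, hP, hQ]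
  exact tendsto_finsetSum _ fun k _ => (hconv k).mul (hz.pow k)

theorem tendsto_divDiff_of_tendsto_coeff (hP : ∀ i, (P i).natDegree = n) (hQ : Q.natDegree = n)
    (hconv : ∀ k, Tendsto (fun i => (P i).coeff k) l (𝓝 (Q.coeff k)))
    {a b : ι → R} {a₀ b₀ : R} (ha : Tendsto a l (𝓝 a₀)) (hb : Tendsto b l (𝓝 b₀)) :
    Tendsto (fun i => divDiff (P i) (a i) (b i)) l (𝓝 (divDiff Q a₀ b₀)) := by
  simp only [divDiff, hP, hQ]
  exact tendsto_finsetSum _ fun k _ =>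
    (hconv k).mul (tendsto_finsetSum _ fun i _ => (ha.pow i).mul (hb.pow _))

end Convergence

theorem exists_eventually_norm_lt_of_isRoot {ι K : Type*} [NormedField K] {l : Filter ι}
    {P : ι → K[X]} {Q : K[X]} {n : ℕ} (hmonic : ∀ i, (P i).Monic) (hP : ∀ i, (P i).natDegree = n)
    (hconv : ∀ k, Tendsto (fun i => (P i).coeff k) l (𝓝 (Q.coeff k))) :
    ∃ r : ℝ, ∀ᶠ i in l, ∀ z, (P i).IsRoot z → ‖z‖ < r := by
  set B : NNReal := ∑ k ∈ Finset.range n, ‖Q.coeff k‖₊ + 1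
  have hcoeff : ∀ᶠ i in l, ∀ k ∈ Finset.range n, ‖(P i).coeff k‖₊ ≤ B := by
    refine (Filter.eventually_all_finset _).2 fun k hk => ?_
    filter_upwards [(hconv k).nnnorm.eventually_lt_const (lt_add_one ‖Q.coeff k‖₊)] with i hi
    exact hi.le.trans (add_le_add_left
      (Finset.single_le_sum (f := fun k => ‖Q.coeff k‖₊) (fun _ _ => zero_le) hk) 1)
  refine ⟨B + 1, hcoeff.mono fun i hi z hz => ?_⟩
  have := hz.norm_lt_cauchyBound (hmonic i).ne_zero
  rw [cauchyBound, (hmonic i).leadingCoeff, nnnorm_one, div_one, hP] at this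
  exact_mod_cast this.trans_le (add_le_add_left (Finset.sup_le hi) 1)

-- Roots in the closed right half-plane can only accumulate at `0`; there the divided differences
-- `divDiff (P i) (a i) (b i) = 0` tend to `Q'(0)`.
theorem X_sq_dvd_of_tendsto_coeff {P : ℕ → ℂ[X]} {Q : ℂ[X]} {n : ℕ} (hmonic : ∀ i, (P i).Monic)
    (hP : ∀ i, (P i).natDegree = n) (hQ : Q.natDegree = n)
    (hconv : ∀ k, Tendsto (fun i => (P i).coeff k) atTop (𝓝 (Q.coeff k)))
    (hstable : ∀ z, Q.IsRoot z → z ≠ 0 → z.re < 0) {a b : ℕ → ℂ}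
    (hre : ∀ i, 0 ≤ (a i).re ∧ 0 ≤ (b i).re) (hdvd : ∀ i, (X - C (a i)) * (X - C (b i)) ∣ P i) :
    X ^ 2 ∣ Q := by
  have haroot (i : ℕ) : (P i).IsRoot (a i) :=
    dvd_iff_isRoot.1 ((dvd_mul_right _ _).trans (hdvd i))
  have hbroot (i : ℕ) : (P i).IsRoot (b i) :=
    dvd_iff_isRoot.1 ((dvd_mul_left _ _).trans (hdvd i))
  obtain ⟨r, hr⟩ := exists_eventually_norm_lt_of_isRoot hmonic hP hconv
  have hbdd : ∀ᶠ i in atTop, (a i, b i) ∈ Metric.closedBall (0 : ℂ × ℂ) r :=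
    hr.mono fun i hi => mem_closedBall_zero_iff.2 <|
      (Prod.norm_def _).trans_le (max_le (hi _ (haroot i)).le (hi _ (hbroot i)).le)
  obtain ⟨⟨a₀, b₀⟩, -, φ, hφ, hlim⟩ :=
    tendsto_subseq_of_frequently_bounded Metric.isBounded_closedBall hbdd.frequently
  have hconvφ (k : ℕ) : Tendsto (fun i => (P (φ i)).coeff k) atTop (𝓝 (Q.coeff k)) :=
    (hconv k).comp hφ.tendsto_atTop
  have hlim_root {c : ℕ → ℂ} {c₀ : ℂ} (hc : ∀ i, (P i).IsRoot (c i)) (hcre : ∀ i, 0 ≤ (c i).re)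
      (hcφ : Tendsto (c ∘ φ) atTop (𝓝 c₀)) : Q.IsRoot c₀ ∧ 0 ≤ c₀.re :=
    ⟨tendsto_nhds_unique (tendsto_eval_of_tendsto_coeff (fun i => hP (φ i)) hQ hconvφ hcφ)
      (tendsto_const_nhds.congr fun i => (hc (φ i)).symm),
    ge_of_tendsto ((Complex.continuous_re.tendsto _).comp hcφ) (.of_forall fun i => hcre (φ i))⟩
  have hzero {c₀ : ℂ} (hroot : Q.IsRoot c₀) (hre₀ : 0 ≤ c₀.re) : c₀ = 0 :=
    by_contra fun h => (hstable c₀ hroot h).not_ge hre₀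
  have hφa := (continuous_fst.tendsto _).comp hlim
  have hφb := (continuous_snd.tendsto _).comp hlim
  obtain ⟨ha₀root, ha₀re⟩ := hlim_root haroot (fun i => (hre i).1) hφa
  obtain ⟨hb₀root, hb₀re⟩ := hlim_root hbroot (fun i => (hre i).2) hφb
  obtain rfl := hzero ha₀root ha₀re
  obtain rfl := hzero hb₀root hb₀re
  have hcoeff1 : Q.coeff 1 = 0 := by
    rw [← divDiff_zero_zero]
    exact tendsto_nhds_unique
      (tendsto_divDiff_of_tendsto_coeff (fun i => hP (φ i)) hQ hconvφ hφa hφb)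
      (tendsto_const_nhds.congr fun i => (divDiff_eq_zero_of_dvd (hdvd (φ i))).symm)
  refine X_pow_dvd_iff.2 fun d hd => ?_
  interval_cases d
  exacts [coeff_zero_eq_eval_zero Q ▸ ha₀root, hcoeff1]

end Polynomial

namespace Matrix

theorem continuous_charpoly_coeff_s12 {n R : Type*} [Fintype n] [DecidableEq n] [CommRing R]
    [TopologicalSpace R] [IsTopologicalRing R] (k : ℕ) :
    Continuous fun M : Matrix n n R => M.charpoly.coeff k := by
  have h (M : Matrix n n R) : M.charpoly.coeff k =
      MvPolynomial.eval (fun p : n × n => M p.1 p.2) ((Matrix.charpoly.univ R n).coeff k) := by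
    rw [MvPolynomial.eval, Matrix.charpoly.univ_coeff_eval₂Hom]; rfl
  simp only [h]
  exact (MvPolynomial.continuous_eval _).comp (by fun_prop)

theorem eval_zero_charpoly {n R : Type*} [Fintype n] [DecidableEq n] [CommRing R]
    (M : Matrix n n R) : M.charpoly.eval 0 = (-M).det := by
  simp [Matrix.eval_charpoly]

end Matrix

theorem someEigPosRe_of_det_neg_lt_zero {n : ℕ} {M : Matrix (Fin n) (Fin n) ℝ}
    (h : (-M).det < 0) : SomeEigPosRe M := by
  obtain ⟨x, hx, hroot⟩ := M.charpoly_monic.exists_pos_isRoot_of_eval_zero_neg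
    (M.eval_zero_charpoly ▸ h)
  exact ⟨x, hroot.map (f := algebraMap ℝ ℂ), hx⟩

theorem eventually_allEigNegRe {ι : Type*} {l : Filter ι} [l.IsCountablyGenerated] {n : ℕ}
    {M : ι → Matrix (Fin n) (Fin n) ℝ} {A : Matrix (Fin n) (Fin n) ℝ} (hM : Tendsto M l (𝓝 A))
    (hdet : ∀ᶠ i in l, 0 < (-M i).det)
    (hmult : (A.charpoly.map (algebraMap ℝ ℂ)).rootMultiplicity 0 = 1)
    (hstable : ∀ z, (A.charpoly.map (algebraMap ℝ ℂ)).IsRoot z → z ≠ 0 → z.re < 0) :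
    ∀ᶠ i in l, AllEigNegRe (M i) := by
  rw [eventually_iff_seq_eventually]
  intro x hx
  by_contra hbad
  obtain ⟨φ, hφmono, hφ⟩ := extraction_of_frequently_atTop
    ((not_eventually.1 hbad).and_eventually (hx.eventually hdet))
  have hroots (i : ℕ) : ∃ a b : ℂ, 0 ≤ a.re ∧ 0 ≤ b.re ∧
      (X - C a) * (X - C b) ∣ (M (x (φ i))).charpoly.map (algebraMap ℝ ℂ) := by
    obtain ⟨hunstable, hpos⟩ := hφ i
    simp only [AllEigNegRe, not_forall, not_lt] at hunstable
    obtain ⟨μ, hμ, hμre⟩ := hunstable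
    exact (M (x (φ i))).charpoly_monic.exists_X_sub_C_mul_X_sub_C_dvd
      ((M (x (φ i))).eval_zero_charpoly ▸ hpos) hμ hμre
  choose a b hare hbre hdvd using hroots
  have hconv (k : ℕ) : Tendsto (fun i => ((M (x (φ i))).charpoly.map (algebraMap ℝ ℂ)).coeff k)
      atTop (𝓝 ((A.charpoly.map (algebraMap ℝ ℂ)).coeff k)) := by
    simp only [coeff_map]
    exact ((Complex.continuous_ofReal.comp (continuous_charpoly_coeff_s12 k)).tendsto A).comp
      (hM.comp (hx.comp hφmono.tendsto_atTop))
  have hdvd2 := X_sq_dvd_of_tendsto_coeff (fun i => (M (x (φ i))).charpoly_monic.map _)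
    (fun i => by rw [(M _).charpoly_monic.natDegree_map, Matrix.charpoly_natDegree_eq_dim])
    (by rw [A.charpoly_monic.natDegree_map, Matrix.charpoly_natDegree_eq_dim]) hconv hstable
    (fun i => ⟨hare i, hbre i⟩) hdvd
  have := (le_rootMultiplicity_iff (A.charpoly_monic.map (algebraMap ℝ ℂ)).ne_zero).2
    (by rwa [map_zero, sub_zero])
  omega

theorem allEigNegRe_of_dotProduct_mulVec_neg {n : ℕ} {M : Matrix (Fin n) (Fin n) ℝ}
    (h : ∀ x : Fin n → ℝ, x ≠ 0 → x ⬝ᵥ M *ᵥ x < 0) : AllEigNegRe M := by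
  intro μ hμ
  rw [← charpoly_map, IsRoot, eval_charpoly] at hμ
  obtain ⟨v, hv0, hv⟩ := exists_mulVec_eq_zero_iff.2 hμ
  have hMv : M.map (algebraMap ℝ ℂ) *ᵥ v = μ • v := by
    rw [sub_mulVec, scalar_apply, ← smul_one_eq_diagonal, smul_mulVec, one_mulVec,
      sub_eq_zero] at hv
    exact hv.symm
  set a : Fin n → ℝ := fun i => (v i).re
  set b : Fin n → ℝ := fun i => (v i).im
  have hform : (star v ⬝ᵥ M.map (algebraMap ℝ ℂ) *ᵥ v).re = a ⬝ᵥ M *ᵥ a + b ⬝ᵥ M *ᵥ b := by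
    simp only [dotProduct, mulVec, Complex.re_sum, Finset.mul_sum, ← Finset.sum_add_distrib]
    refine Finset.sum_congr rfl fun i _ => Finset.sum_congr rfl fun j _ => ?_
    simp [a, b, Complex.mul_re, Complex.mul_im]
  have hnorm : (star v ⬝ᵥ (μ • v)).re = μ.re * (a ⬝ᵥ a + b ⬝ᵥ b) := by
    simp only [dotProduct, Complex.re_sum, Finset.mul_sum, ← Finset.sum_add_distrib]
    refine Finset.sum_congr rfl fun i _ => ?_
    simp [a, b, Complex.mul_re, Complex.mul_im]
    ring
  have hle (x : Fin n → ℝ) : x ⬝ᵥ M *ᵥ x ≤ 0 := by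
    rcases eq_or_ne x 0 with rfl | hx
    · simp
    · exact (h x hx).le
  have hsq (x : Fin n → ℝ) : 0 ≤ x ⬝ᵥ x := Finset.sum_nonneg fun i _ => mul_self_nonneg (x i)
  have hsq_pos {x : Fin n → ℝ} (hx : x ≠ 0) : 0 < x ⬝ᵥ x :=
    (hsq x).lt_of_ne (Ne.symm (mt dotProduct_self_eq_zero.1 hx))
  have hab : a ≠ 0 ∨ b ≠ 0 := by
    by_contra! hab
    exact hv0 (funext fun i => Complex.ext (congrFun hab.1 i) (congrFun hab.2 i))
  obtain ⟨hneg, hpos⟩ : a ⬝ᵥ M *ᵥ a + b ⬝ᵥ M *ᵥ b < 0 ∧ 0 < a ⬝ᵥ a + b ⬝ᵥ b := by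
    rcases hab with ha | hb
    · exact ⟨by linarith [h a ha, hle b], by linarith [hsq_pos ha, hsq b]⟩
    · exact ⟨by linarith [h b hb, hle a], by linarith [hsq_pos hb, hsq a]⟩
  rw [← hform, hMv, hnorm] at hneg
  exact neg_of_mul_neg_left hneg hpos.le

theorem eventually_dotProduct_mulVec_neg {n : ℕ} (A J2 J4 : Matrix (Fin n) (Fin n) ℝ)
    (hJ4 : ∀ x : Fin n → ℝ, x ⬝ᵥ J4 *ᵥ x ≤ 0) {κbar : ℝ}
    (hneg : ∀ x : Fin n → ℝ, x ≠ 0 → x ⬝ᵥ (J2 + κbar ^ 2 • J4) *ᵥ x < 0) :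
    ∀ᶠ κ : ℝ in atTop, ∀ x : Fin n → ℝ, x ≠ 0 → x ⬝ᵥ (A + κ ^ 2 • J2 + κ ^ 4 • J4) *ᵥ x < 0 := by
  -- With `t = κ⁻²`, the form divided by `κ²` is at most `t A + (J₂ + κ̄² J₄)`, which is negative
  -- uniformly on the compact unit sphere for small `t`.
  have hsphere : ∀ᶠ t in 𝓝 (0 : ℝ), ∀ u ∈ Metric.sphere (0 : Fin n → ℝ) 1,
      t * (u ⬝ᵥ A *ᵥ u) + u ⬝ᵥ (J2 + κbar ^ 2 • J4) *ᵥ u < 0 := by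
    refine (isCompact_sphere 0 1).eventually_forall_of_forall_eventually fun u hu => ?_
    refine ContinuousAt.eventually_lt (f := fun z : ℝ × (Fin n → ℝ) =>
      z.1 * (z.2 ⬝ᵥ A *ᵥ z.2) + z.2 ⬝ᵥ (J2 + κbar ^ 2 • J4) *ᵥ z.2)
      (by fun_prop) continuousAt_const ?_
    simpa using hneg u (Metric.ne_of_mem_sphere hu one_ne_zero)
  have hinv : Tendsto (fun κ : ℝ => (κ ^ 2)⁻¹) atTop (𝓝 0) :=
    tendsto_inv_atTop_zero.comp (tendsto_pow_atTop two_ne_zero)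
  filter_upwards [hinv.eventually hsphere,
    (tendsto_pow_atTop two_ne_zero).eventually_ge_atTop (κbar ^ 2), eventually_gt_atTop 0]
    with κ hκ hκbar hκpos x hx
  have hxpos : 0 < ‖x‖ := norm_pos_iff.2 hx
  set u := ‖x‖⁻¹ • x
  have hu : u ∈ Metric.sphere (0 : Fin n → ℝ) 1 := by
    simp [u, norm_smul, hxpos.ne']
  have hxu : x = ‖x‖ • u := by simp [u, smul_smul, hxpos.ne']
  have hscale (M : Matrix (Fin n) (Fin n) ℝ) : x ⬝ᵥ M *ᵥ x = ‖x‖ ^ 2 * (u ⬝ᵥ M *ᵥ u) := by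
    conv_lhs => rw [hxu]
    rw [mulVec_smul, smul_dotProduct, dotProduct_smul, smul_eq_mul, smul_eq_mul]; ring
  rw [hscale]
  refine mul_neg_of_pos_of_neg (pow_pos hxpos 2) ?_
  have hu' := hκ u hu
  simp only [add_mulVec, smul_mulVec, dotProduct_add, dotProduct_smul, smul_eq_mul] at hu' ⊢
  have hκ2 : (0 : ℝ) < κ ^ 2 := by positivity
  have hsplit : u ⬝ᵥ A *ᵥ u + κ ^ 2 * (u ⬝ᵥ J2 *ᵥ u) + κ ^ 4 * (u ⬝ᵥ J4 *ᵥ u) =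
      κ ^ 2 * ((κ ^ 2)⁻¹ * (u ⬝ᵥ A *ᵥ u) + (u ⬝ᵥ J2 *ᵥ u + κbar ^ 2 * (u ⬝ᵥ J4 *ᵥ u))) +
        κ ^ 2 * (κ ^ 2 - κbar ^ 2) * (u ⬝ᵥ J4 *ᵥ u) := by
    field_simp
    ring
  rw [hsplit]
  exact add_neg_of_neg_of_nonpos (mul_neg_of_pos_of_neg hκ2 hu')
    (mul_nonpos_of_nonneg_of_nonpos (mul_nonneg hκ2.le (sub_nonneg.2 hκbar)) (hJ4 u))

theorem stmt12_general (n m : ℕ) (B : Matrix (Fin n) (Fin m) ℝ) (C : Matrix (Fin m) (Fin n) ℝ)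
    (Δlo Δhi : Fin m → ℝ) (J2 J4 : Matrix (Fin n) (Fin n) ℝ)
    (hJ4nsd : ∀ x : Fin n → ℝ, x ⬝ᵥ J4.mulVec x ≤ 0)
    (hκbar : ∃ κbar : ℝ, 0 < κbar ∧
      ∀ x : Fin n → ℝ, x ≠ 0 → x ⬝ᵥ (J2 + κbar ^ 2 • J4).mulVec x < 0)
    (hspec : ∀ Δ : Fin m → ℝ, (∀ j, Δlo j ≤ Δ j ∧ Δ j ≤ Δhi j) →
      (((B * Matrix.diagonal Δ * C).charpoly).map (algebraMap ℝ ℂ)).rootMultiplicity 0 = 1 ∧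
      (∀ z : ℂ, (((B * Matrix.diagonal Δ * C).charpoly).map (algebraMap ℝ ℂ)).IsRoot z →
        z ≠ 0 → z.re < 0))
    (hPsiMinusInitPos : ∃ κhat : ℝ, 0 < κhat ∧ ∀ κ : ℝ, 0 < κ → κ < κhat →
      ∀ Δ : Fin m → ℝ, (∀ j, Δlo j ≤ Δ j ∧ Δ j ≤ Δhi j) →
        0 < (-(Jmat B C J2 J4 Δ κ)).det)
    (hPsiPlusNeg : ∃ κ2 : ℝ, 0 < κ2 ∧ ∀ Δ : Fin m → ℝ,
      (∀ j, Δlo j ≤ Δ j ∧ Δ j ≤ Δhi j) → (-(Jmat B C J2 J4 Δ κ2)).det < 0) :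
    ∀ Δ : Fin m → ℝ, (∀ j, Δlo j ≤ Δ j ∧ Δ j ≤ Δhi j) → Microphase B C J2 J4 Δ := by
  obtain ⟨κbar, -, hκbar⟩ := hκbar
  obtain ⟨κhat, hκhat, hPsiMinus⟩ := hPsiMinusInitPos
  obtain ⟨κ₂, hκ₂, hPsiPlus⟩ := hPsiPlusNeg
  intro Δ hΔ
  obtain ⟨hmult, hstable⟩ := hspec Δ hΔ
  have hJ : Tendsto (Jmat B C J2 J4 Δ) (𝓝[>] 0) (𝓝 (B * diagonal Δ * C)) := by
    have hcont : Continuous (Jmat B C J2 J4 Δ) := by unfold Jmat; fun_prop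
    simpa [Jmat] using (hcont.tendsto 0).mono_left nhdsWithin_le_nhds
  have hdet : ∀ᶠ κ in 𝓝[>] 0, 0 < (-Jmat B C J2 J4 Δ κ).det :=
    Filter.mem_of_superset (Ioo_mem_nhdsGT hκhat) fun κ hκ => hPsiMinus κ hκ.1 hκ.2 Δ hΔ
  obtain ⟨κs, hκs, hsmall⟩ :=
    mem_nhdsGT_iff_exists_Ioo_subset.1 (eventually_allEigNegRe hJ hdet hmult hstable)
  obtain ⟨κbig, hlarge, hκbig⟩ :=
    ((eventually_dotProduct_mulVec_neg _ J2 J4 hJ4nsd hκbar).and (eventually_gt_atTop κ₂)).exists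
  have hmin : 0 < min κs κ₂ := lt_min hκs hκ₂
  refine ⟨min κs κ₂ / 2, κ₂, κbig, half_pos hmin, by linarith [min_le_right κs κ₂], hκbig,
    fun κ hκ hκlt => hsmall ⟨hκ, by linarith [min_le_left κs κ₂]⟩,
    someEigPosRe_of_det_neg_lt_zero (hPsiPlus Δ hΔ), allEigNegRe_of_dotProduct_mulVec_neg hlarge⟩

/-- (Theorem 3, robust sufficient condition) Under the structural assumptions on
`J₂, J₄` and on the spectrum of `B ⬝ diag(Δ) ⬝ C` for all `Δ ∈ 𝒟`, if
`Ψ⁻(κ) = min_{Δ ∈ 𝒟} det (-J(Δ,κ))` is initially positive and there is `κ₂ > 0` with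
`det (-J(Δ,κ₂)) < 0` for all `Δ ∈ 𝒟` (`Ψ⁺` has a negative sign change), then every
`Δ ∈ 𝒟` exhibits microphase separation. -/
theorem stmt12 (n m : ℕ) (B : Matrix (Fin n) (Fin m) ℝ) (C : Matrix (Fin m) (Fin n) ℝ)
    (Δlo Δhi : Fin m → ℝ) (hbounds : ∀ j, 0 ≤ Δlo j ∧ Δlo j ≤ Δhi j)
    (J2 J4 : Matrix (Fin n) (Fin n) ℝ) (hJ2 : J2.IsSymm) (hJ4 : J4.IsSymm)
    (hJ4nsd : ∀ x : Fin n → ℝ, x ⬝ᵥ J4.mulVec x ≤ 0)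
    (hκbar : ∃ κbar : ℝ, 0 < κbar ∧
      ∀ x : Fin n → ℝ, x ≠ 0 → x ⬝ᵥ (J2 + κbar ^ 2 • J4).mulVec x < 0)
    (hspec : ∀ Δ : Fin m → ℝ, (∀ j, Δlo j ≤ Δ j ∧ Δ j ≤ Δhi j) →
      (((B * Matrix.diagonal Δ * C).charpoly).map (algebraMap ℝ ℂ)).rootMultiplicity 0 = 1 ∧
      (∀ z : ℂ, (((B * Matrix.diagonal Δ * C).charpoly).map (algebraMap ℝ ℂ)).IsRoot z →
        z ≠ 0 → z.re < 0))
    (hPsiMinusInitPos : ∃ κhat : ℝ, 0 < κhat ∧ ∀ κ : ℝ, 0 < κ → κ < κhat →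
      ∀ Δ : Fin m → ℝ, (∀ j, Δlo j ≤ Δ j ∧ Δ j ≤ Δhi j) →
        0 < (-(Jmat B C J2 J4 Δ κ)).det)
    (hPsiPlusNeg : ∃ κ2 : ℝ, 0 < κ2 ∧ ∀ Δ : Fin m → ℝ,
      (∀ j, Δlo j ≤ Δ j ∧ Δ j ≤ Δhi j) → (-(Jmat B C J2 J4 Δ κ2)).det < 0) :
    ∀ Δ : Fin m → ℝ, (∀ j, Δlo j ≤ Δ j ∧ Δ j ≤ Δhi j) → Microphase B C J2 J4 Δ :=
  stmt12_general n m B C Δlo Δhi J2 J4 hJ4nsd hκbar hspec hPsiMinusInitPos hPsiPlusNeg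
end

section
/- (Proposition 1) Let B be a real n×m matrix, C a real m×n matrix, J₂ and J₄ real n×n matrices, and let 𝒟 = {Δ ∈ ℝ^m : Δⱼ⁻ ≤ Δⱼ ≤ Δⱼ⁺ for all j} with Δⱼ⁻ ≤ Δⱼ⁺. Then for every κ ∈ ℝ and every Δ ∈ 𝒟 there exist vertices Δ', Δ'' of 𝒟 (points whose j-th coordinate lies in {Δⱼ⁻, Δⱼ⁺} for every j) such that det(−(B·diag(Δ')·C + κ² J₂ + κ⁴ J₄)) ≤ det(−(B·diag(Δ)·C + κ² J₂ + κ⁴ J₄)) ≤ det(−(B·diag(Δ'')·C + κ² J₂ + κ⁴ J₄)). In particular, the minimum Ψ⁻(κ) and the maximum Ψ⁺(κ) of det(−(B·diag(Δ)·C + κ² J₂ + κ⁴ J₄)) over Δ ∈ 𝒟 are attained at vertices of 𝒟. -/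
open Matrix

lemma det_rank_one_update {n : ℕ} (N : Matrix (Fin n) (Fin n) ℝ) (u v : Fin n → ℝ) (t : ℝ) :
    (N + t • Matrix.of (fun i k => u i * v k)).det
      = N.det + t * ∑ i, u i * (N.updateRow i v).det := by
  classical
  set f := (Matrix.detRowAlternating : (Fin n → ℝ) [⋀^Fin n]→ₗ[ℝ] ℝ) with hf
  set b : Fin n → (Fin n → ℝ) := fun i => (t * u i) • v with hb
  have key : (N + t • Matrix.of (fun i k => u i * v k)) = Matrix.of (b + fun i => N i) := by
    ext i k
    simp [hb, Matrix.add_apply, Matrix.smul_apply, Matrix.of_apply, mul_assoc, add_comm]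
  rw [key]
  show f.toMultilinearMap (b + fun i => N i) = _
  rw [MultilinearMap.map_add_univ]
  set S₁ : Finset (Finset (Fin n)) := Finset.univ.image fun i : Fin n => ({i} : Finset (Fin n))
    with hS₁
  have hzero : ∀ s ∈ (Finset.univ : Finset (Finset (Fin n))), s ∉ insert ∅ S₁ →
      f.toMultilinearMap (s.piecewise b fun i => N i) = 0 := by
    intro s _ hs
    have hne : s ≠ ∅ := fun h => hs (h ▸ Finset.mem_insert_self _ _)
    have hns : ¬∃ i, s = {i} := by
      rintro ⟨i, rfl⟩
      exact hs (Finset.mem_insert_of_mem (Finset.mem_image.mpr ⟨i, Finset.mem_univ _, rfl⟩))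
    have hcard : 1 < s.card := by
      rcases Nat.lt_or_ge s.card 2 with h | h
      · interval_cases h' : s.card
        · exact absurd (Finset.card_eq_zero.mp h') hne
        · exact absurd (Finset.card_eq_one.mp h') hns
      · omega
    obtain ⟨i, hi, j, hj, hij⟩ := Finset.one_lt_card.mp hcard
    set x : Fin n → (Fin n → ℝ) := s.piecewise b fun i => N i with hx
    have hxi : x i = (t * u i) • v := Finset.piecewise_eq_of_mem _ _ _ hi
    have hxj : x j = (t * u j) • v := Finset.piecewise_eq_of_mem _ _ _ hj
    have e1 : f.toMultilinearMap x = f x := rfl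
    have hxup : Function.update x i ((t * u i) • v) = x := by rw [← hxi]; exact Function.update_eq_self i x
    rw [e1, ← hxup, f.map_update_smul]
    have hji : (Function.update x i v) j = (t * u j) • v := by
      rw [Function.update_of_ne hij.symm, hxj]
    have hxup2 : Function.update (Function.update x i v) j ((t * u j) • v)
        = Function.update x i v := by rw [← hji]; exact Function.update_eq_self _ _
    rw [← hxup2, f.map_update_smul]
    have : f (Function.update (Function.update x i v) j v) = 0 := by
      apply f.map_eq_zero_of_eq _ _ hij
      · rw [Function.update_of_ne hij, Function.update_self, Function.update_self]
    rw [this]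
    simp
  rw [← Finset.sum_subset (Finset.subset_univ (insert ∅ S₁)) hzero]
  have hnotmem : (∅ : Finset (Fin n)) ∉ S₁ := by
    simp only [hS₁, Finset.mem_image, not_exists]
    intro x ⟨_, h⟩
    exact (Finset.singleton_ne_empty x) h
  rw [Finset.sum_insert hnotmem]
  have h0 : f.toMultilinearMap ((∅ : Finset (Fin n)).piecewise b fun i => N i) = N.det := by
    rw [Finset.piecewise_empty]
    rfl
  rw [h0]
  congr 1
  rw [Finset.sum_image (fun i _ j _ h => Finset.singleton_injective h)]
  rw [Finset.mul_sum]
  apply Finset.sum_congr rfl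
  intro i _
  rw [Finset.piecewise_singleton]
  have e1 : f.toMultilinearMap (Function.update (fun i => N i) i (b i)) 
      = f (Function.update (fun i => N i) i ((t * u i) • v)) := rfl
  rw [e1, f.map_update_smul]
  have : f (Function.update (fun i => N i) i v) = (N.updateRow i v).det := rfl
  rw [this]
  simp [mul_assoc]

lemma affine_box_max {m : ℕ} (F : (Fin m → ℝ) → ℝ)
    (haff : ∀ (Δ : Fin m → ℝ) (j : Fin m), ∃ α β : ℝ, ∀ t, F (Function.update Δ j t) = α + β * t)
    (lo hi : Fin m → ℝ) (hb : ∀ j, lo j ≤ hi j) :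
    ∀ (s : Finset (Fin m)) (Δ : Fin m → ℝ), (∀ j, lo j ≤ Δ j ∧ Δ j ≤ hi j) →
      ∃ Δ'' : Fin m → ℝ, (∀ j, lo j ≤ Δ'' j ∧ Δ'' j ≤ hi j) ∧
        (∀ j ∈ s, Δ'' j = lo j ∨ Δ'' j = hi j) ∧ (∀ j ∉ s, Δ'' j = Δ j) ∧ F Δ ≤ F Δ'' := by
  intro s
  induction s using Finset.induction_on with
  | empty =>
    intro Δ hΔ
    exact ⟨Δ, hΔ, by simp, fun _ _ => rfl, le_refl _⟩
  | @insert a s ha ih =>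
    intro Δ hΔ
    obtain ⟨α, β, hαβ⟩ := haff Δ a
    have hFΔ : F Δ = α + β * Δ a := by rw [← hαβ (Δ a), Function.update_eq_self]
    obtain ⟨t, ht, hFt⟩ : ∃ t, (t = lo a ∨ t = hi a) ∧ F Δ ≤ F (Function.update Δ a t) := by
      rcases le_or_gt 0 β with hβ | hβ
      · exact ⟨hi a, Or.inr rfl, by rw [hFΔ, hαβ]; nlinarith [(hΔ a).2]⟩
      · exact ⟨lo a, Or.inl rfl, by rw [hFΔ, hαβ]; nlinarith [(hΔ a).1]⟩
    set Δ₁ := Function.update Δ a t with hΔ₁def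
    have hΔ₁ : ∀ j, lo j ≤ Δ₁ j ∧ Δ₁ j ≤ hi j := by
      intro j
      by_cases hj : j = a
      · subst hj
        rcases ht with h | h <;> simp [hΔ₁def, h, hb j]
      · simpa [hΔ₁def, Function.update_of_ne hj] using hΔ j
    obtain ⟨Δ'', h1, h2, h3, h4⟩ := ih Δ₁ hΔ₁
    refine ⟨Δ'', h1, ?_, ?_, le_trans hFt h4⟩
    · intro j hj
      rcases Finset.mem_insert.mp hj with rfl | hj
      · rw [h3 j ha]
        simp only [hΔ₁def, Function.update_self]
        exact ht
      · exact h2 j hj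
    · intro j hj
      have hja : j ≠ a := fun h => hj (h ▸ Finset.mem_insert_self a s)
      rw [h3 j fun h => hj (Finset.mem_insert_of_mem h)]
      simp [hΔ₁def, Function.update_of_ne hja]

/-- (Proposition 1) For every `κ` and every `Δ` in the box `𝒟`, there are vertices
`Δ', Δ''` of `𝒟` such that
`det (-(B ⬝ diag(Δ') ⬝ C + κ² J₂ + κ⁴ J₄)) ≤ det (-(B ⬝ diag(Δ) ⬝ C + κ² J₂ + κ⁴ J₄))
  ≤ det (-(B ⬝ diag(Δ'') ⬝ C + κ² J₂ + κ⁴ J₄))`;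
in particular `Ψ⁻(κ)` and `Ψ⁺(κ)` are attained at vertices of `𝒟`. -/
theorem stmt15 (n m : ℕ) (B : Matrix (Fin n) (Fin m) ℝ) (C : Matrix (Fin m) (Fin n) ℝ)
    (J2 J4 : Matrix (Fin n) (Fin n) ℝ)
    (Δlo Δhi : Fin m → ℝ) (hbounds : ∀ j, Δlo j ≤ Δhi j) :
    ∀ (κ : ℝ) (Δ : Fin m → ℝ), (∀ j, Δlo j ≤ Δ j ∧ Δ j ≤ Δhi j) →
      ∃ Δ' Δ'' : Fin m → ℝ,
        (∀ j, Δ' j = Δlo j ∨ Δ' j = Δhi j) ∧ (∀ j, Δ'' j = Δlo j ∨ Δ'' j = Δhi j) ∧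
        (-(B * Matrix.diagonal Δ' * C + κ ^ 2 • J2 + κ ^ 4 • J4)).det ≤
          (-(B * Matrix.diagonal Δ * C + κ ^ 2 • J2 + κ ^ 4 • J4)).det ∧
        (-(B * Matrix.diagonal Δ * C + κ ^ 2 • J2 + κ ^ 4 • J4)).det ≤
          (-(B * Matrix.diagonal Δ'' * C + κ ^ 2 • J2 + κ ^ 4 • J4)).det := by
  intro κ Δ hΔ
  set F : (Fin m → ℝ) → ℝ :=
    fun Δ => (-(B * Matrix.diagonal Δ * C + κ ^ 2 • J2 + κ ^ 4 • J4)).det with hF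
  have haff : ∀ (Δ : Fin m → ℝ) (j : Fin m),
      ∃ α β : ℝ, ∀ t, F (Function.update Δ j t) = α + β * t := by
    intro Δ j
    set u : Fin n → ℝ := fun i => -(B i j) with hu
    set v : Fin n → ℝ := fun k => C j k with hv
    set N : Matrix (Fin n) (Fin n) ℝ :=
      -(B * Matrix.diagonal (Function.update Δ j 0) * C + κ ^ 2 • J2 + κ ^ 4 • J4) with hN
    have hmat : ∀ t : ℝ,
        -(B * Matrix.diagonal (Function.update Δ j t) * C + κ ^ 2 • J2 + κ ^ 4 • J4)
          = N + t • Matrix.of (fun i k => u i * v k) := by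
      intro t
      have hupd : Function.update Δ j t = Function.update Δ j 0 + t • (Pi.single j 1 : Fin m → ℝ) := by
        funext l
        by_cases h : l = j
        · subst h; simp
        · simp [Function.update_of_ne h, Pi.single_apply, h]
      have hW : B * Matrix.diagonal (Pi.single j (1:ℝ)) * C
          = -(Matrix.of fun i k => u i * v k) := by
        ext i k
        rw [Matrix.mul_apply]
        simp only [Matrix.mul_diagonal, Pi.single_apply, mul_ite, ite_mul, mul_one, mul_zero,
          zero_mul, Matrix.neg_apply, Matrix.of_apply, hu, hv]
        rw [Finset.sum_ite_eq' Finset.univ j (fun l => B i l * C l k)]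
        simp
      rw [hupd, show Matrix.diagonal (Function.update Δ j 0 + t • (Pi.single j 1 : Fin m → ℝ))
          = Matrix.diagonal (Function.update Δ j 0)
            + t • Matrix.diagonal (Pi.single j (1:ℝ)) from by
        rw [← Matrix.diagonal_smul, Matrix.diagonal_add]; rfl]
      rw [Matrix.mul_add, Matrix.add_mul, Matrix.mul_smul, Matrix.smul_mul, hW, hN]
      module
    exact ⟨N.det, ∑ i, u i * (N.updateRow i v).det, fun t => by
      rw [hF]; simp only; rw [hmat t, det_rank_one_update]; ring⟩
  obtain ⟨Δ'', h1'', h2'', _, h4''⟩ :=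
    affine_box_max F haff Δlo Δhi hbounds Finset.univ Δ hΔ
  have haffneg : ∀ (Δ : Fin m → ℝ) (j : Fin m),
      ∃ α β : ℝ, ∀ t, (-F (Function.update Δ j t)) = α + β * t := by
    intro Δ j
    obtain ⟨α, β, h⟩ := haff Δ j
    exact ⟨-α, -β, fun t => by rw [h t]; ring⟩
  obtain ⟨Δ', h1', h2', _, h4'⟩ :=
    affine_box_max (fun Δ => -F Δ) haffneg Δlo Δhi hbounds Finset.univ Δ hΔ
  exact ⟨Δ', Δ'', fun j => h2' j (Finset.mem_univ j), fun j => h2'' j (Finset.mem_univ j),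
    neg_le_neg_iff.mp h4', h4''⟩
end
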